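/- arXiv:2602.13750 — 6 statements merged into one kernel-verified Lean document; each statement's English description precedes it below -/
import Mathlib

section
/- For real numbers a_1, ..., a_n and a natural number m, the sum over all sign vectors y ∈ {-1,1}^n of (∑_{i=1}^n a_i y_i)^m equals 2^n times the sum over all tuples (k_1,...,k_n) of even natural numbers with k_1+...+k_n = m of the multinomial coefficient m!/(k_1!⋯k_n!) times a_1^{k_1}⋯a_n^{k_n}. -/
open Finset

theorem stmt_0 (n m : ℕ) (a : Fin n → ℝ) :
    ∑ y : Fin n → ({-1, 1} : Finset ℤ), (∑ i, a i * ((y i : ℤ) : ℝ)) ^ m =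
      2 ^ n * ∑ k ∈ (Finset.Nat.antidiagonalTuple n m).filter (fun k => ∀ i, Even (k i)),
        (Nat.multinomial Finset.univ k : ℝ) * ∏ i, a i ^ k i := by
  have key : ∀ y : Fin n → ({-1, 1} : Finset ℤ),
      (∑ i, a i * ((y i : ℤ) : ℝ)) ^ m =
        ∑ k ∈ Finset.Nat.antidiagonalTuple n m,
          (Nat.multinomial Finset.univ k : ℝ) *
            ((∏ i, a i ^ k i) * ∏ i, ((y i : ℤ) : ℝ) ^ k i) := by
    intro y
    rw [Finset.sum_pow_eq_sum_piAntidiag univ (fun i => a i * ((y i : ℤ) : ℝ)) m,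
      piAntidiag_univ_fin_eq_antidiagonalTuple]
    refine Finset.sum_congr rfl fun k _ => ?_
    rw [← Finset.prod_mul_distrib]
    simp [mul_pow]
  simp_rw [key]
  rw [Finset.sum_comm]
  have hy : ∀ k : Fin n → ℕ,
      (∑ y : Fin n → ({-1, 1} : Finset ℤ), ∏ i, ((y i : ℤ) : ℝ) ^ k i) =
        ∏ i, ∑ j : ({-1, 1} : Finset ℤ), ((j : ℤ) : ℝ) ^ k i := by
    intro k
    rw [Fintype.prod_sum (fun i (j : ({-1, 1} : Finset ℤ)) => ((j : ℤ) : ℝ) ^ k i)]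
  have hval : ∀ c : ℕ, (∑ j : ({-1, 1} : Finset ℤ), ((j : ℤ) : ℝ) ^ c) =
      if Even c then 2 else 0 := by
    intro c
    rw [Finset.sum_coe_sort _ (fun j : ℤ => ((j : ℝ)) ^ c)]
    rw [Finset.sum_insert (by norm_num), Finset.sum_singleton]
    rcases Nat.even_or_odd c with h | h
    · simp [h.neg_one_pow, h]; norm_num
    · simp [h.neg_one_pow, Nat.not_even_iff_odd.mpr h]
  have hprod : ∀ k : Fin n → ℕ,
      (∏ i, ∑ j : ({-1, 1} : Finset ℤ), ((j : ℤ) : ℝ) ^ k i) =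
        if (∀ i, Even (k i)) then 2 ^ n else 0 := by
    intro k
    by_cases h : ∀ i, Even (k i)
    · simp only [h, if_true]
      rw [Finset.prod_congr rfl fun i _ => by rw [hval, if_pos (h i)]]
      simp
    · simp only [h, if_false]
      push_neg at h
      obtain ⟨i, hi⟩ := h
      exact Finset.prod_eq_zero (Finset.mem_univ i) (by rw [hval, if_neg hi])
  calc ∑ k ∈ Finset.Nat.antidiagonalTuple n m,
        ∑ y : Fin n → ({-1, 1} : Finset ℤ),
          (Nat.multinomial Finset.univ k : ℝ) *
            ((∏ i, a i ^ k i) * ∏ i, ((y i : ℤ) : ℝ) ^ k i)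
      = ∑ k ∈ Finset.Nat.antidiagonalTuple n m,
          (Nat.multinomial Finset.univ k : ℝ) * ((∏ i, a i ^ k i) *
            if (∀ i, Even (k i)) then (2 : ℝ) ^ n else 0) := by
        refine Finset.sum_congr rfl fun k _ => ?_
        rw [← Finset.mul_sum, ← Finset.mul_sum, hy, hprod]
    _ = 2 ^ n * ∑ k ∈ (Finset.Nat.antidiagonalTuple n m).filter (fun k => ∀ i, Even (k i)),
          (Nat.multinomial Finset.univ k : ℝ) * ∏ i, a i ^ k i := by
        rw [Finset.mul_sum, Finset.sum_filter]
        refine Finset.sum_congr rfl fun k _ => ?_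
        by_cases h : ∀ i, Even (k i) <;> simp [h] <;> ring
end

section
/- Let m, n ≥ 1 and let K_{m,n} be the complete bipartite graph with parts A = {u_1,...,u_m} and B = {v_1,...,v_n}. Let a_1,...,a_m and b_1,...,b_n be positive integers with ∑ a_i = ∑ b_j = m + n - 1. Then the number of spanning trees of K_{m,n} in which u_i has degree a_i and v_j has degree b_j for all i, j equals (m-1)!(n-1)! / (∏_{i=1}^m (a_i - 1)! ∏_{j=1}^n (b_j - 1)!). -/
/-!
Delete a leaf `v`. The trees in which `v` hangs at `u` correspond bijectively to the trees on
`V ∖ {v}` in which the degree prescribed at `u` is lowered by one. Writing `N(d)` for the number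
of trees with degree sequence `d` and `P(d) = ∏ₓ (d x - 1)!`, this gives
`N(d) P(d) = ∑ᵤ (d u - 1) N(dᵤ) P(dᵤ)` over the possible neighbours `u` of `v`; when `d u = 1`,
`u` would be isolated after the deletion, and the term vanishes on both sides.
In `K_{A,B}` such a leaf can be taken in a part with at least two vertices unless both parts
are singletons, since otherwise the degree sums force each part to be smaller than the other.
For `v ∈ A`, induction gives `N(dᵤ) P(dᵤ) = (|A| - 2)! (|B| - 1)!` for every `u ∈ B`, and
`∑_{u ∈ B} (d u - 1) = (|A| + |B| - 1) - |B|`.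
-/

open Finset
open scoped Nat

lemma Nat.card_eq_sum_card_of_existsUnique {α β : Type*} [Finite α] [Fintype β] {S : Set α}
    (R : α → β → Prop) (h : ∀ x ∈ S, ∃! b, R x b) :
    Nat.card S = ∑ b, Nat.card {x // x ∈ S ∧ R x b} := by
  choose g hg hgu using h
  rw [← Nat.card_sigma]
  refine Nat.card_congr ((Equiv.sigmaFiberEquiv fun x : S => g x x.2).symm.trans
    (Equiv.sigmaCongrRight fun b => ?_))
  refine (Equiv.subtypeEquivRight fun x => ?_).trans
    (Equiv.subtypeSubtypeEquivSubtypeInter (· ∈ S) (R · b))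
  exact ⟨fun e => e ▸ hg x x.2, fun hb => (hgu x x.2 b hb).symm⟩

lemma mul_prod_factorial_update {ι : Type*} [Fintype ι] [DecidableEq ι] (g : ι → ℕ) (i : ι)
    (hi : 2 ≤ g i) :
    (g i - 1) * ∏ j, (Function.update g i (g i - 1) j - 1)! = ∏ j, (g j - 1)! := by
  rw [Fintype.prod_eq_mul_prod_compl i, Fintype.prod_eq_mul_prod_compl i (fun j => (g j - 1)!),
    Function.update_self, ← mul_assoc, Nat.mul_factorial_pred (by omega)]
  congr 1
  exact prod_congr rfl fun j hj => by rw [Function.update_of_ne (by simpa using hj)]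

lemma pos_update_sub_one {ι : Type*} [DecidableEq ι] {d : ι → ℕ} {u : ι} (hd : ∀ x, 0 < d x)
    (hdu : 2 ≤ d u) (x : ι) :
    0 < Function.update d u (d u - 1) x := by
  rw [Function.update_apply]
  split_ifs
  · omega
  · exact hd x

section ComplSingleton

variable {V : Type*} [Fintype V] [DecidableEq V]

@[to_additive]
lemma prod_compl_singleton_mul {M : Type*} [CommMonoid M] (v : V) (g : V → M) :
    (∏ x : ({v}ᶜ : Set V), g x) * g v = ∏ x, g x := by
  rw [Fintype.prod_eq_mul_prod_subtype_ne g v, mul_comm]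
  rfl

lemma Fintype.card_compl_singleton (v : V) :
    Fintype.card ({v}ᶜ : Set V) = Fintype.card V - 1 := by
  rw [Fintype.card_compl_set, Set.card_singleton]

lemma sum_filter_update_add (u : V) (p : V → Prop) [DecidablePred p] (g : V → ℕ)
    (hu : 0 < g u) :
    (∑ x with p x, Function.update g u (g u - 1) x) + (if p u then 1 else 0) =
      ∑ x with p x, g x := by
  by_cases hpu : p u
  · have hmem : u ∈ ({x | p x} : Finset V) := by simpa using hpu
    rw [sum_update_of_mem hmem, sum_eq_add_sum_sdiff_singleton_of_mem hmem g, if_pos hpu]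
    omega
  · rw [sum_update_of_notMem (by simpa using hpu), if_neg hpu, add_zero]

end ComplSingleton

section BoolColoring

variable {V : Type*} [Fintype V]

lemma card_filter_eq_add_card_filter_eq_not (f : V → Bool) (c : Bool) :
    #{x | f x = c} + #{x | f x = !c} = Fintype.card V := by
  simp only [Bool.eq_not_iff]
  exact card_filter_add_card_filter_not _

variable {f : V → Bool} {d : V → ℕ}

lemma forall_card_eq_one_or_exists_leaf [Nonempty V] (hd : ∀ x, 0 < d x)
    (hsum : ∀ c, ∑ x with f x = c, d x = Fintype.card V - 1) :
    (∀ c, #{x | f x = c} = 1) ∨ ∃ v, d v = 1 ∧ 2 ≤ #{x | f x = f v} := by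
  by_contra! h
  obtain ⟨⟨c, hc⟩, hleaf⟩ := h
  have hbound : ∀ c, #{x | f x = c} ≤ Fintype.card V - 1 ∧
      (2 ≤ #{x | f x = c} → 2 * #{x | f x = c} ≤ Fintype.card V - 1) := fun c => by
    rw [← hsum c]
    refine ⟨by simpa using card_nsmul_le_sum _ d 1 fun x _ => hd x, fun h2 => ?_⟩
    have hclass : ∀ x ∈ ({x | f x = c} : Finset V), 2 ≤ d x := fun x hx => by
      have hfx : f x = c := by simpa using hx
      by_contra! hdx
      have := hleaf x (by have := hd x; omega)
      rw [hfx] at this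
      omega
    simpa [mul_comm] using card_nsmul_le_sum _ d 2 hclass
  have := card_filter_eq_add_card_filter_eq_not f c
  have := Fintype.card_pos (α := V)
  have := hbound c
  have := hbound (!c)
  omega

lemma sum_filter_ne_sub_one (hd : ∀ x, 0 < d x)
    (hsum : ∀ c, ∑ x with f x = c, d x = Fintype.card V - 1) (v : V) :
    ∑ u with f v ≠ f u, (d u - 1) = #{x | f x = f v} - 1 := by
  have hfilter : ∀ u, f v ≠ f u ↔ f u = !f v := fun u => by rw [ne_comm, Bool.eq_not_iff]
  simp only [hfilter]
  have hsub : ∑ u with f u = !f v, (d u - 1) + #{u | f u = !f v} =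
      ∑ u with f u = !f v, d u := by
    rw [card_eq_sum_ones, ← sum_add_distrib]
    exact sum_congr rfl fun u _ => Nat.sub_add_cancel (hd u)
  have := card_filter_eq_add_card_filter_eq_not f (f v)
  have := hsum (!f v)
  omega

variable [DecidableEq V]

lemma card_filter_compl_singleton (v : V) (c : Bool) :
    #(univ.filter fun x : ({v}ᶜ : Set V) => f x = c) =
      Function.update (fun c => #{x | f x = c}) (f v) (#{x | f x = f v} - 1) c := by
  have h := sum_compl_singleton_add v (fun x => if f x = c then 1 else 0)
  simp only [← sum_filter, ← card_eq_sum_ones] at h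
  by_cases hc : c = f v
  · subst hc
    simp only [if_pos, Function.update_self] at h ⊢
    omega
  · rw [Function.update_of_ne hc, ← h, if_neg (Ne.symm hc), add_zero]

lemma sum_update_compl_singleton {v u : V}
    (hsum : ∀ c, ∑ x with f x = c, d x = Fintype.card V - 1) (hdv : d v = 1) (hdu : 0 < d u)
    (hvu : f v ≠ f u) (c : Bool) :
    ∑ x ∈ univ.filter (fun x : ({v}ᶜ : Set V) => f x = c), Function.update d u (d u - 1) x =
      Fintype.card ({v}ᶜ : Set V) - 1 := by
  have hcompl := sum_compl_singleton_add v
    (fun x => if f x = c then Function.update d u (d u - 1) x else 0)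
  have hupdate := sum_filter_update_add u (f · = c) d hdu
  rw [← sum_filter, ← sum_filter,
    Function.update_of_ne (show v ≠ u from fun h => hvu (congrArg f h)), hdv] at hcompl
  rw [hsum c] at hupdate
  have := Fintype.card_compl_singleton v
  have := Fintype.card_pos_iff.2 ⟨u⟩
  rcases Bool.eq_or_eq_not c (f v) with rfl | rfl
  · simp only [if_pos, if_neg hvu.symm] at hcompl hupdate
    omega
  · simp only [Bool.eq_not_iff.2 hvu.symm, if_pos, Bool.eq_not_iff, ne_eq, not_true,
      if_false] at hcompl hupdate ⊢
    omega

end BoolColoring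

namespace SimpleGraph

variable {V : Type*} {G T : SimpleGraph V} {u v : V}

lemma adj_iff_of_neighborSet_eq_singleton (hv : G.neighborSet v = {u}) {x : V} :
    G.Adj v x ↔ x = u := by
  rw [← mem_neighborSet, hv, Set.mem_singleton_iff]

lemma Walk.IsCycle.notMem_support_of_subsingleton_neighborSet {w : V} {c : G.Walk w w}
    (hc : c.IsCycle) (hv : (G.neighborSet v).Subsingleton) : v ∉ c.support := by
  classical
  intro hvc
  have hc' := hc.rotate (u := v) hvc
  exact hc'.snd_ne_penultimate <|
    hv ((c.rotate v hvc).adj_snd hc'.not_nil) ((c.rotate v hvc).adj_penultimate hc'.not_nil).symm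

lemma IsAcyclic.of_induce_compl_singleton (hv : (G.neighborSet v).Subsingleton)
    (h : (G.induce {v}ᶜ).IsAcyclic) : G.IsAcyclic := by
  intro w c hc
  have hcv : ∀ x ∈ c.support, x ∈ ({v}ᶜ : Set V) := fun x hx hxv =>
    hc.notMem_support_of_subsingleton_neighborSet hv (hxv ▸ hx)
  refine h (c.induce _ hcv) (Walk.IsCycle.of_map (f := (Embedding.induce _).toHom) ?_)
  rwa [Walk.map_induce]

lemma Connected.of_induce_compl_singleton (h : (G.induce {v}ᶜ).Connected) (hvu : G.Adj v u) :
    G.Connected := by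
  refine (connected_iff_exists_forall_reachable G).2 ⟨u, fun x => ?_⟩
  by_cases hx : x = v
  · exact hx ▸ hvu.reachable.symm
  · exact (h.preconnected ⟨u, hvu.ne.symm⟩ ⟨x, hx⟩).map (Embedding.induce _).toHom

lemma isTree_iff_induce_compl_singleton (hv : G.neighborSet v = {u}) :
    G.IsTree ↔ (G.induce {v}ᶜ).IsTree := by
  have hvu : G.Adj v u := (adj_iff_of_neighborSet_eq_singleton hv).2 rfl
  have hsub : (G.neighborSet v).Subsingleton := hv ▸ Set.subsingleton_singleton
  refine ⟨fun hG => ⟨?_, hG.isAcyclic.induce _⟩, fun hG =>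
    ⟨hG.connected.of_induce_compl_singleton hvu, hG.isAcyclic.of_induce_compl_singleton hsub⟩⟩
  have : Nonempty ({v}ᶜ : Set V) := ⟨⟨u, hvu.ne.symm⟩⟩
  refine ⟨hG.connected.preconnected.induce_of_degree_eq_one fun x hx => ?_⟩
  rwa [Set.notMem_compl_iff.1 hx]

def attachLeaf (v u : V) (H : SimpleGraph ({v}ᶜ : Set V)) : SimpleGraph V :=
  H.map (Function.Embedding.subtype _) ⊔ edge v u

section AttachLeaf

variable {H : SimpleGraph ({v}ᶜ : Set V)}

lemma attachLeaf_adj {x y : V} : (attachLeaf v u H).Adj x y ↔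
    (∃ (hx : x ≠ v) (hy : y ≠ v), H.Adj ⟨x, hx⟩ ⟨y, hy⟩) ∨
      ((x = v ∧ y = u ∨ x = u ∧ y = v) ∧ x ≠ y) := by
  simp only [attachLeaf, sup_adj, map_adj, Function.Embedding.subtype_apply, edge_adj]
  constructor
  · rintro (⟨⟨x, hx⟩, ⟨y, hy⟩, h, rfl, rfl⟩ | h)
    exacts [Or.inl ⟨hx, hy, h⟩, Or.inr h]
  · rintro (⟨hx, hy, h⟩ | h)
    exacts [Or.inl ⟨_, _, h, rfl, rfl⟩, Or.inr h]

@[simp] lemma induce_attachLeaf : (attachLeaf v u H).induce {v}ᶜ = H := by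
  ext ⟨x, hx⟩ ⟨y, hy⟩
  simp only [comap_adj, Function.Embedding.subtype_apply, attachLeaf_adj]
  grind

lemma neighborSet_attachLeaf (huv : u ≠ v) : (attachLeaf v u H).neighborSet v = {u} := by
  ext x
  simp only [mem_neighborSet, attachLeaf_adj, Set.mem_singleton_iff]
  grind

end AttachLeaf

lemma attachLeaf_induce (hv : T.neighborSet v = {u}) : attachLeaf v u (T.induce {v}ᶜ) = T := by
  have hv' := fun x => adj_iff_of_neighborSet_eq_singleton (x := x) hv
  ext x y
  simp only [attachLeaf_adj, comap_adj, Function.Embedding.subtype_apply]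
  grind [T.adj_comm, SimpleGraph.irrefl]

lemma card_neighborSet_induce (s : Set V) (x : s) :
    Nat.card ((T.induce s).neighborSet x) = (T.neighborSet x ∩ s).ncard := by
  rw [Nat.card_coe_set_eq, ← Set.ncard_image_of_injective _ Subtype.val_injective]
  congr 1
  ext y
  simp

lemma card_neighborSet_induce_compl_singleton [Finite V] [DecidableEq V]
    (hv : T.neighborSet v = {u}) (x : ({v}ᶜ : Set V)) :
    Nat.card ((T.induce {v}ᶜ).neighborSet x) =
      Function.update (fun y => Nat.card (T.neighborSet y)) u
        (Nat.card (T.neighborSet u) - 1) x := by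
  have hv' : ∀ y, T.Adj y v ↔ y = u := fun y => by
    rw [T.adj_comm, adj_iff_of_neighborSet_eq_singleton hv]
  rw [card_neighborSet_induce, ← Set.sdiff_eq]
  by_cases hxu : (x : V) = u
  · rw [hxu, Function.update_self, Nat.card_coe_set_eq]
    exact Set.ncard_sdiff_singleton_of_mem ((hv' u).2 rfl)
  · rw [Function.update_of_ne hxu, Nat.card_coe_set_eq, Set.sdiff_singleton_eq_self]
    exact fun h => hxu ((hv' x).1 h)

def degreeTrees (G : SimpleGraph V) (d : V → ℕ) : Set (SimpleGraph V) :=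
  {T | T ≤ G ∧ T.IsTree ∧ ∀ x, Nat.card (T.neighborSet x) = d x}

variable {d : V → ℕ}

lemma exists_neighborSet_eq_singleton_of_mem_degreeTrees (hT : T ∈ degreeTrees G d)
    (hdv : d v = 1) : ∃ w, T.neighborSet v = {w} := by
  have hcard := hT.2.2 v
  rwa [hdv, Nat.card_coe_set_eq, Set.ncard_eq_one] at hcard

lemma neighborSet_eq_singleton_of_mem_degreeTrees (hT : T ∈ degreeTrees G d) (hdv : d v = 1)
    (hvu : T.Adj v u) : T.neighborSet v = {u} := by
  obtain ⟨w, hw⟩ := exists_neighborSet_eq_singleton_of_mem_degreeTrees hT hdv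
  rwa [(adj_iff_of_neighborSet_eq_singleton hw).1 hvu]

lemma degreeTrees_eq_empty_of_eq_zero [Finite V] [Nontrivial V] {x : V} (hx : d x = 0) :
    degreeTrees G d = ∅ := by
  refine Set.eq_empty_of_forall_notMem fun T hT => ?_
  obtain ⟨y, hxy⟩ := hT.2.1.connected.preconnected.exists_adj_of_nontrivial x
  have hcard := hT.2.2 x
  rw [hx, Nat.card_coe_set_eq, Set.ncard_eq_zero (Set.toFinite _)] at hcard
  exact (hcard ▸ hxy : y ∈ (∅ : Set V))

lemma induce_mem_degreeTrees_iff [Finite V] [DecidableEq V]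
    (hv : T.neighborSet v = {u}) (hvu : G.Adj v u) (hdv : d v = 1) (hdu : 0 < d u) :
    T.induce {v}ᶜ ∈ degreeTrees (G.induce {v}ᶜ) (Function.update d u (d u - 1) ∘ (↑)) ↔
      T ∈ degreeTrees G d := by
  have hv' := fun x => adj_iff_of_neighborSet_eq_singleton (x := x) hv
  have hTu : 0 < Nat.card (T.neighborSet u) := by
    rw [Nat.card_coe_set_eq]
    exact (Set.ncard_pos (Set.toFinite _)).2 ⟨v, ((hv' u).2 rfl).symm⟩
  simp only [degreeTrees, Set.mem_ofPred_eq, ← isTree_iff_induce_compl_singleton hv]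
  refine and_congr ⟨fun hle x y hxy => ?_, fun hle => comap_monotone _ hle⟩
    (and_congr_right fun _ => ⟨fun hdeg x => ?_, fun hdeg x => ?_⟩)
  · by_cases hx : x = v
    · subst hx
      exact (hv' y).1 hxy ▸ hvu
    by_cases hy : y = v
    · subst hy
      exact (hv' x).1 hxy.symm ▸ hvu.symm
    exact hle (v := ⟨x, hx⟩) (w := ⟨y, hy⟩) hxy
  · by_cases hxv : x = v
    · rw [hxv, hv, hdv, Nat.card_unique]
    have hx := hdeg ⟨x, hxv⟩
    simp only [card_neighborSet_induce_compl_singleton hv, Function.comp_apply] at hx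
    by_cases hxu : x = u
    · subst hxu
      simp only [Function.update_self] at hx
      omega
    · simpa [Function.update_of_ne hxu] using hx
  · rw [card_neighborSet_induce_compl_singleton hv, Function.comp_apply, hdeg u, funext hdeg]

lemma card_degreeTrees_adj [Finite V] [DecidableEq V] (hvu : G.Adj v u) (hdv : d v = 1)
    (hdu : 0 < d u) :
    Nat.card {T // T ∈ degreeTrees G d ∧ T.Adj v u} =
      Nat.card (degreeTrees (G.induce {v}ᶜ) (Function.update d u (d u - 1) ∘ (↑))) := by
  have hleaf := fun T : {T // T ∈ degreeTrees G d ∧ T.Adj v u} =>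
    neighborSet_eq_singleton_of_mem_degreeTrees T.2.1 hdv T.2.2
  have hattach := fun H => neighborSet_attachLeaf (H := H) hvu.ne.symm
  exact Nat.card_congr
    { toFun T := ⟨T.1.induce {v}ᶜ, (induce_mem_degreeTrees_iff (hleaf T) hvu hdv hdu).2 T.2.1⟩
      invFun H := ⟨attachLeaf v u H, (induce_mem_degreeTrees_iff (hattach H) hvu hdv hdu).1
          (by rw [induce_attachLeaf]; exact H.2),
        (adj_iff_of_neighborSet_eq_singleton (hattach H)).2 rfl⟩
      left_inv T := Subtype.ext (attachLeaf_induce (hleaf T))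
      right_inv H := Subtype.ext induce_attachLeaf }

theorem card_degreeTrees_mul_prod_factorial_eq_sum [Fintype V] [DecidableEq V]
    [DecidableRel G.Adj] [Nontrivial ({v}ᶜ : Set V)] (hd : ∀ x, 0 < d x) (hdv : d v = 1) :
    Nat.card (degreeTrees G d) * ∏ x, (d x - 1)! =
      ∑ u with G.Adj v u, (d u - 1) *
        (Nat.card (degreeTrees (G.induce {v}ᶜ) (Function.update d u (d u - 1) ∘ (↑))) *
          ∏ x : ({v}ᶜ : Set V), (Function.update d u (d u - 1) x - 1)!) := by
  have hunique : ∀ T ∈ degreeTrees G d, ∃! u, T.Adj v u := fun T hT => by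
    obtain ⟨w, hw⟩ := exists_neighborSet_eq_singleton_of_mem_degreeTrees hT hdv
    exact ⟨w, (adj_iff_of_neighborSet_eq_singleton hw).2 rfl,
      fun y => (adj_iff_of_neighborSet_eq_singleton hw).1⟩
  rw [Nat.card_eq_sum_card_of_existsUnique _ hunique, sum_mul, sum_filter]
  refine sum_congr rfl fun u _ => ?_
  split_ifs with hvu
  · rw [card_degreeTrees_adj hvu hdv (hd u)]
    rcases eq_or_ne (d u) 1 with hdu | hdu
    · rw [degreeTrees_eq_empty_of_eq_zero (x := ⟨u, hvu.ne.symm⟩) (by simp [hdu]), hdu]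
      simp
    · rw [← mul_prod_factorial_update d u (by have := hd u; omega),
        ← prod_compl_singleton_mul v, Function.update_of_ne hvu.ne, hdv]
      simp only [Nat.sub_self, Nat.factorial_zero, mul_one]
      ring
  · have : IsEmpty {T // T ∈ degreeTrees G d ∧ T.Adj v u} := ⟨fun T => hvu (T.2.1.1 T.2.2)⟩
    rw [Nat.card_of_isEmpty, zero_mul]

-- `(⊤ : SimpleGraph Bool).comap f` is the complete bipartite graph with parts `f ⁻¹' {true}`
-- and `f ⁻¹' {false}`; in this form deleting a vertex only restricts the colouring `f`.
section Bicolored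

variable {f : V → Bool}

lemma degreeTrees_comap_top_of_bijective (hf : Function.Bijective f) :
    degreeTrees ((⊤ : SimpleGraph Bool).comap f) 1 = {(⊤ : SimpleGraph Bool).comap f} := by
  set G := (⊤ : SimpleGraph Bool).comap f
  set e := Equiv.ofBijective f hf
  have hnbr : ∀ x, G.neighborSet x = {e.symm (!f x)} := fun x => by
    ext y
    simp [G, Equiv.eq_symm_apply, e, Bool.eq_not_iff, ne_comm]
  have hG : G.IsTree := by
    refine ⟨(connected_iff G).2 ⟨fun x y => ?_, ⟨e.symm true⟩⟩, fun w c hc => ?_⟩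
    · by_cases hxy : f x = f y
      · rw [hf.1 hxy]
      · exact Adj.reachable (by simpa [G] using hxy)
    · exact hc.notMem_support_of_subsingleton_neighborSet
        (hnbr w ▸ Set.subsingleton_singleton) c.start_mem_support
  ext T
  rw [Set.mem_singleton_iff]
  refine ⟨fun hT => le_antisymm hT.1 fun x y hxy => ?_, ?_⟩
  · obtain ⟨z, hz⟩ := exists_neighborSet_eq_singleton_of_mem_degreeTrees hT (v := x) rfl
    have hxz := (adj_iff_of_neighborSet_eq_singleton hz).2 rfl
    have hGxz := hT.1 hxz
    rw [adj_iff_of_neighborSet_eq_singleton (hnbr x)] at hxy hGxz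
    rwa [hxy, ← hGxz]
  · rintro rfl
    exact ⟨le_rfl, hG, fun x => by simp [hnbr]⟩

variable [Fintype V]

lemma card_degreeTrees_comap_top_mul_prod_factorial_of_forall_card_eq_one
    (hsum : ∀ c, ∑ x with f x = c, d x = Fintype.card V - 1)
    (hone : ∀ c, #{x | f x = c} = 1) :
    Nat.card (degreeTrees ((⊤ : SimpleGraph Bool).comap f) d) * ∏ x, (d x - 1)! =
      ∏ c, (#{x | f x = c} - 1)! := by
  have hinj : Function.Injective f := fun x y hxy =>
    card_le_one.1 (hone (f x)).le x (by simp) y (by simp [hxy])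
  have hsurj : Function.Surjective f := fun c => by
    obtain ⟨x, hx⟩ := card_pos.1 (by rw [hone c]; omega : 0 < #{x | f x = c})
    exact ⟨x, by simpa using hx⟩
  have hd : d = 1 := funext fun x => by
    obtain ⟨z, hz⟩ := card_eq_one.1 (hone (f x))
    have hx : x ∈ ({z} : Finset V) := hz ▸ by simp
    have hsx := hsum (f x)
    rwa [hz, sum_singleton, ← card_filter_eq_add_card_filter_eq_not f true, hone, hone,
      ← mem_singleton.1 hx] at hsx
  subst hd
  rw [degreeTrees_comap_top_of_bijective ⟨hinj, hsurj⟩]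
  simp [hone]

variable [DecidableEq V]

theorem card_degreeTrees_comap_top_mul_prod_factorial [Nonempty V]
    (hd : ∀ x, 0 < d x) (hsum : ∀ c, ∑ x with f x = c, d x = Fintype.card V - 1) :
    Nat.card (degreeTrees ((⊤ : SimpleGraph Bool).comap f) d) * ∏ x, (d x - 1)! =
      ∏ c, (#{x | f x = c} - 1)! := by
  obtain ⟨n, hn⟩ : ∃ n, Fintype.card V = n := ⟨_, rfl⟩
  induction n generalizing V with
  | zero => exact absurd hn Fintype.card_ne_zero
  | succ n ih =>
  obtain hone | ⟨v, hdv, hv2⟩ := forall_card_eq_one_or_exists_leaf hd hsum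
  · exact card_degreeTrees_comap_top_mul_prod_factorial_of_forall_card_eq_one hsum hone
  set G := (⊤ : SimpleGraph Bool).comap f
  obtain ⟨w, hw, hwv⟩ := exists_mem_ne hv2 v
  have hother := sum_filter_ne_sub_one hd hsum v
  obtain ⟨y, hy, -⟩ :=
    exists_ne_zero_of_sum_ne_zero (by omega : ∑ u with f v ≠ f u, (d u - 1) ≠ 0)
  have hyv : f v ≠ f y := by simpa using hy
  have hwy : w ≠ y := fun h => hyv (h ▸ (mem_filter.1 hw).2).symm
  have : Nontrivial ({v}ᶜ : Set V) :=
    ⟨⟨w, hwv⟩, ⟨y, fun h => hyv (h ▸ rfl)⟩, fun h => hwy (congrArg Subtype.val h)⟩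
  have hterm : ∀ u ∈ ({u | G.Adj v u} : Finset V),
      (d u - 1) * (Nat.card (degreeTrees (G.induce {v}ᶜ) (Function.update d u (d u - 1) ∘ (↑))) *
        ∏ x : ({v}ᶜ : Set V), (Function.update d u (d u - 1) x - 1)!) =
      (d u - 1) * ∏ c, (#(univ.filter fun x : ({v}ᶜ : Set V) => f x = c) - 1)! := by
    intro u hu
    have hvu : f v ≠ f u := by simpa [G] using hu
    rcases eq_or_ne (d u) 1 with hdu | hdu
    · simp [hdu]
    refine congrArg _ (ih (fun x => pos_update_sub_one hd (by have := hd u; omega) x)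
      (sum_update_compl_singleton hsum hdv (hd u) hvu) ?_)
    rw [Fintype.card_compl_singleton, hn, Nat.add_sub_cancel]
  rw [card_degreeTrees_mul_prod_factorial_eq_sum hd hdv, sum_congr rfl hterm, ← sum_mul]
  simp only [G, comap_adj, top_adj, card_filter_compl_singleton, hother]
  exact mul_prod_factorial_update (fun c => #{x | f x = c}) (f v) hv2

end Bicolored

lemma completeBipartiteGraph_eq_comap_isLeft (A B : Type*) :
    completeBipartiteGraph A B = (⊤ : SimpleGraph Bool).comap Sum.isLeft := by
  ext x y
  cases x <;> cases y <;> simp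

theorem card_degreeTrees_completeBipartiteGraph_mul {A B : Type*} [Fintype A] [Fintype B]
    [DecidableEq A] [DecidableEq B] [Nonempty A] {a : A → ℕ} {b : B → ℕ} (ha : ∀ i, 0 < a i)
    (hb : ∀ j, 0 < b j) (hsa : ∑ i, a i = Fintype.card A + Fintype.card B - 1)
    (hsb : ∑ j, b j = Fintype.card A + Fintype.card B - 1) :
    Nat.card (degreeTrees (completeBipartiteGraph A B) (Sum.elim a b)) *
        ((∏ i, (a i - 1)!) * ∏ j, (b j - 1)!) =
      (Fintype.card A - 1)! * (Fintype.card B - 1)! := by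
  have h := card_degreeTrees_comap_top_mul_prod_factorial (f := Sum.isLeft) (d := Sum.elim a b)
    (Sum.forall.2 ⟨ha, hb⟩) (fun c => by cases c <;> simp [sum_filter, hsa, hsb])
  have hA : #{x : A ⊕ B | x.isLeft = true} = Fintype.card A := by
    rw [card_filter, Fintype.sum_sum_type]
    simp
  have hB : #{x : A ⊕ B | x.isLeft = false} = Fintype.card B := by
    rw [card_filter, Fintype.sum_sum_type]
    simp
  rwa [← completeBipartiteGraph_eq_comap_isLeft, Fintype.prod_sum_type, Fintype.prod_bool, hA,
    hB] at h

end SimpleGraph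

theorem stmt_4_general (m n : ℕ) (hm : 1 ≤ m)
    (a : Fin m → ℕ) (b : Fin n → ℕ) (ha : ∀ i, 0 < a i) (hb : ∀ j, 0 < b j)
    (hsa : ∑ i, a i = m + n - 1) (hsb : ∑ j, b j = m + n - 1) :
    Nat.card {T : SimpleGraph (Fin m ⊕ Fin n) //
        T ≤ completeBipartiteGraph (Fin m) (Fin n) ∧ T.IsTree ∧
        (∀ i, Nat.card {w // T.Adj (Sum.inl i) w} = a i) ∧
        (∀ j, Nat.card {w // T.Adj (Sum.inr j) w} = b j)} =
      ((m - 1).factorial * (n - 1).factorial) /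
        ((∏ i, (a i - 1).factorial) * ∏ j, (b j - 1).factorial) := by
  have : Nonempty (Fin m) := Fin.pos_iff_nonempty.1 hm
  have h := SimpleGraph.card_degreeTrees_completeBipartiteGraph_mul ha hb
    (by simpa using hsa) (by simpa using hsb)
  simp only [Fintype.card_fin] at h
  rw [← h, Nat.mul_div_cancel _ (by positivity)]
  exact Nat.card_congr <| Equiv.subtypeEquivRight fun T => by
    simp only [SimpleGraph.degreeTrees, Set.mem_ofPred_eq, Sum.forall, Sum.elim_inl, Sum.elim_inr]
    rfl

theorem stmt_4 (m n : ℕ) (hm : 1 ≤ m) (hn : 1 ≤ n)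
    (a : Fin m → ℕ) (b : Fin n → ℕ) (ha : ∀ i, 0 < a i) (hb : ∀ j, 0 < b j)
    (hsa : ∑ i, a i = m + n - 1) (hsb : ∑ j, b j = m + n - 1) :
    Nat.card {T : SimpleGraph (Fin m ⊕ Fin n) //
        T ≤ completeBipartiteGraph (Fin m) (Fin n) ∧ T.IsTree ∧
        (∀ i, Nat.card {w // T.Adj (Sum.inl i) w} = a i) ∧
        (∀ j, Nat.card {w // T.Adj (Sum.inr j) w} = b j)} =
      ((m - 1).factorial * (n - 1).factorial) /
        ((∏ i, (a i - 1).factorial) * ∏ j, (b j - 1).factorial) :=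
  stmt_4_general m n hm a b ha hb hsa hsb
end

section
/- The number of spanning trees of the complete graph K_n on n labeled vertices is n^{n-2} (Cayley's formula). -/
/-!
Joyal's proof. A tree on `V` together with a root `r` is the same thing as its parent map
`p : V → V`, which fixes `r` and under which every vertex eventually reaches `r`; so it suffices
to show `n ^ n = n * n * tₙ`, i.e. to biject endofunctions of `α` with triples
(vertex `a`, root `r`, parent map rooted at `r`).

Fibre both sides over a subset `S ⊆ α`. An endofunction `f` with periodic points `S` is a
permutation of `S` together with a forest retracting `α` onto `S` (namely `f` off `S`). A triple
`(a, r, p)` whose path `a, p a, p² a, …, r` has vertex set `S` is a linear ordering of `S` (the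
order along the path) together with a forest retracting `α` onto `S`. A finite set has as many
permutations as linear orderings, so the fibres are equinumerous.
-/

open Function Set

namespace Function

variable {α : Type*} {f g : α → α} {S : Set α} {x r : α} {k : ℕ}

theorem exists_iterate_mem_periodicPts [Finite α] (f : α → α) (x : α) :
    ∃ k, f^[k] x ∈ periodicPts f := by
  obtain ⟨m, n, hne, heq⟩ := Finite.exists_ne_map_eq_of_infinite (f^[·] x)
  wlog hmn : m < n generalizing m n
  · exact this n m hne.symm heq.symm (by omega)
  refine ⟨m, mk_mem_periodicPts (n := n - m) (by omega) ?_⟩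
  rw [IsPeriodicPt, IsFixedPt, ← iterate_add_apply, Nat.sub_add_cancel hmn.le]
  exact heq.symm

theorem _root_.Set.MapsTo.mem_of_mem_periodicPts (hS : MapsTo f S S) (hx : x ∈ periodicPts f)
    (hk : f^[k] x ∈ S) : x ∈ S := by
  obtain ⟨n, hn, hper⟩ := mem_periodicPts.1 hx
  rw [← (hper.mul_const k).eq, ← Nat.sub_add_cancel (Nat.le_mul_of_pos_left k hn),
    iterate_add_apply]
  exact hS.iterate _ hk

theorem exists_iterate_mem_of_eqOn_compl (hfg : EqOn f g Sᶜ) (hf : ∃ k, f^[k] x ∈ S) :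
    ∃ k, g^[k] x ∈ S := by
  obtain ⟨k, hk⟩ := hf
  induction k generalizing x with
  | zero => exact ⟨0, hk⟩
  | succ k ih =>
    by_cases hx : x ∈ S
    · exact ⟨0, hx⟩
    · rw [iterate_succ_apply, hfg hx] at hk
      obtain ⟨j, hj⟩ := ih hk
      exact ⟨j + 1, hj⟩

def IsRootedAt (f : α → α) (r : α) : Prop :=
  IsFixedPt f r ∧ ∀ x, ∃ k, f^[k] x = r

abbrev RootedMap (α : Type*) : Type _ :=
  Σ r : α, {f : α → α // IsRootedAt f r}

theorem IsRootedAt.eq_of_mem_periodicPts (hf : IsRootedAt f r) (hx : x ∈ periodicPts f) :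
    x = r := by
  obtain ⟨k, hk⟩ := hf.2 x
  exact (mapsTo_singleton.2 hf.1 : MapsTo f {r} {r}).mem_of_mem_periodicPts hx hk

theorem IsRootedAt.apply_ne (hf : IsRootedAt f r) (hx : x ≠ r) : f x ≠ x := fun h =>
  hx (hf.eq_of_mem_periodicPts (mk_mem_periodicPts one_pos h))

theorem IsRootedAt.eq_of_apply_apply_eq (hf : IsRootedAt f r) (h : f (f x) = x) : x = r :=
  hf.eq_of_mem_periodicPts (mk_mem_periodicPts two_pos h)

theorem IsRootedAt.iterate_eq_of_le (hf : IsRootedAt f r) (hk : f^[k] x = r) {m : ℕ}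
    (hkm : k ≤ m) : f^[m] x = r := by
  rw [← Nat.sub_add_cancel hkm, iterate_add_apply, hk, iterate_fixed hf.1]

theorem IsRootedAt.iterate_eq_iterate_min (hf : IsRootedAt f r) {h : ℕ} (hh : f^[h] x = r)
    (k : ℕ) : f^[k] x = f^[min k h] x := by
  rcases le_total k h with hkh | hkh
  · rw [min_eq_left hkh]
  · rw [min_eq_right hkh, hh, hf.iterate_eq_of_le hh hkh]

theorem IsRootedAt.exists_iterate_eq_injOn (hf : IsRootedAt f r) (x : α) :
    ∃ h, f^[h] x = r ∧ InjOn (f^[·] x) (Iic h) := by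
  classical
  refine ⟨Nat.find (hf.2 x), Nat.find_spec (hf.2 x), fun i hi j hj hij => ?_⟩
  wlog hle : i ≤ j generalizing i j
  · exact (this j hj i hi hij.symm (by omega)).symm
  obtain rfl | hlt := hle.eq_or_lt
  · rfl
  -- a repetition makes `f^[i] x` periodic, hence the root, which the minimality of `h` forbids
  have hper : f^[i] x ∈ periodicPts f := mk_mem_periodicPts (n := j - i) (by omega) <| by
    rw [IsPeriodicPt, IsFixedPt, ← iterate_add_apply, Nat.sub_add_cancel hlt.le]
    exact hij.symm
  have := Nat.find_min' (hf.2 x) (hf.eq_of_mem_periodicPts hper)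
  simp only [mem_Iic] at hi hj
  omega

theorem IsRootedAt.card_range_iterate (hf : IsRootedAt f r) {h : ℕ} (hh : f^[h] x = r)
    (hinj : InjOn (f^[·] x) (Iic h)) : Nat.card (range (f^[·] x)) = h + 1 := by
  have hrange : range (f^[·] x) = range fun i : Fin (h + 1) => f^[i] x := by
    ext y
    constructor
    · rintro ⟨k, rfl⟩
      exact ⟨⟨min k h, by omega⟩, (hf.iterate_eq_iterate_min hh k).symm⟩
    · rintro ⟨i, rfl⟩
      exact mem_range_self _
  rw [hrange, Nat.card_range_of_injective, Nat.card_fin]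
  intro i j hij
  exact Fin.ext (hinj (mem_Iic.2 (Nat.lt_succ_iff.1 i.2)) (mem_Iic.2 (Nat.lt_succ_iff.1 j.2)) hij)

theorem IsRootedAt.iterate_card_range_sub_one (hf : IsRootedAt f r) (x : α) :
    f^[Nat.card (range (f^[·] x)) - 1] x = r := by
  obtain ⟨h, hh, hinj⟩ := hf.exists_iterate_eq_injOn x
  rwa [hf.card_range_iterate hh hinj, Nat.add_sub_cancel]

theorem IsRootedAt.bijective_iterate (hf : IsRootedAt f r) (hS : range (f^[·] x) = S) :
    Bijective fun i : Fin (Nat.card S) => (⟨f^[i] x, hS ▸ mem_range_self (i : ℕ)⟩ : S) := by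
  subst hS
  obtain ⟨h, hh, hinj⟩ := hf.exists_iterate_eq_injOn x
  have hcard := hf.card_range_iterate hh hinj
  refine ⟨fun i j hij => Fin.ext (hinj ?_ ?_ (congrArg Subtype.val hij)), ?_⟩
  · exact mem_Iic.2 (by have := i.2; omega)
  · exact mem_Iic.2 (by have := j.2; omega)
  · rintro ⟨y, k, rfl⟩
    exact ⟨⟨min k h, by omega⟩, Subtype.ext (hf.iterate_eq_iterate_min hh k).symm⟩

theorem IsRootedAt.exists_iterate_mem_range (hf : IsRootedAt f r) (x y : α) :
    ∃ k, f^[k] y ∈ range (f^[·] x) := by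
  obtain ⟨k, hk⟩ := hf.2 y
  obtain ⟨j, hj⟩ := hf.2 x
  exact ⟨k, hk ▸ ⟨j, hj⟩⟩

/-- Parent maps of the rooted forests whose set of roots is `S`. -/
abbrev RootedForest (S : Set α) : Type _ :=
  {g : α → α // (∀ x ∈ S, g x = x) ∧ ∀ x, ∃ k, g^[k] x ∈ S}

theorem RootedForest.card_pos [Finite α] [Nonempty α] (g : RootedForest S) : 0 < Nat.card S := by
  obtain ⟨k, hk⟩ := g.2.2 (Classical.arbitrary α)
  have : Nonempty S := ⟨⟨_, hk⟩⟩
  exact Nat.card_pos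

open Classical in
noncomputable def glue (S : Set α) (u : S → S) (g : α → α) (x : α) : α :=
  if h : x ∈ S then u ⟨x, h⟩ else g x

variable {u : S → S}

theorem glue_of_mem (h : x ∈ S) : glue S u g x = u ⟨x, h⟩ := dif_pos h

theorem glue_of_notMem (h : x ∉ S) : glue S u g x = g x := dif_neg h

theorem semiconj_glue : Semiconj Subtype.val u (glue S u g) := fun y => (glue_of_mem y.2).symm

theorem mapsTo_glue : MapsTo (glue S u g) S S := fun x h => by
  rw [glue_of_mem h]
  exact (u _).2

theorem exists_iterate_glue_mem (hg : ∃ k, g^[k] x ∈ S) : ∃ k, (glue S u g)^[k] x ∈ S :=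
  exists_iterate_mem_of_eqOn_compl (fun _ hy => (glue_of_notMem hy).symm) hg

theorem glue_glue {v : S → S} : glue S u (glue S v g) = glue S u g := by
  funext x
  by_cases hx : x ∈ S <;> simp only [glue_of_mem, glue_of_notMem, hx, not_false_eq_true]

theorem glue_eq_self (hu : ∀ y : S, (u y : α) = f y) : glue S u f = f := by
  funext x
  by_cases hx : x ∈ S
  · rw [glue_of_mem hx, hu]
  · rw [glue_of_notMem hx]

noncomputable def RootedForest.collapse (f : α → α) (hf : ∀ x, ∃ k, f^[k] x ∈ S) :
    RootedForest S :=
  ⟨glue S id f, fun _ hx => glue_of_mem hx, fun x => exists_iterate_glue_mem (hf x)⟩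

theorem periodicPts_glue [Finite α] (σ : Equiv.Perm S) (g : RootedForest S) :
    periodicPts (glue S σ g.1) = S := by
  ext x
  refine ⟨fun hx => ?_, fun hx => semiconj_glue.mapsTo_periodicPts
    (σ.injective.mem_periodicPts ⟨x, hx⟩)⟩
  obtain ⟨k, hk⟩ := exists_iterate_glue_mem (u := σ) (g.2.2 x)
  exact mapsTo_glue.mem_of_mem_periodicPts hx hk

noncomputable def periodicPtsFiberEquiv [Finite α] (S : Set α) :
    {f : α → α // periodicPts f = S} ≃ Equiv.Perm S × RootedForest S where
  toFun f := ((by simpa only [f.2] using bijOn_periodicPts f.1 : BijOn f.1 S S).equiv,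
    .collapse f.1 fun x => by simpa only [f.2] using exists_iterate_mem_periodicPts f.1 x)
  invFun p := ⟨glue S p.1 p.2.1, periodicPts_glue p.1 p.2⟩
  left_inv f := Subtype.ext <| glue_glue.trans (glue_eq_self fun _ => rfl)
  right_inv p := Prod.ext (Equiv.ext fun y => Subtype.ext (glue_of_mem y.2))
    (Subtype.ext <| glue_glue.trans (glue_eq_self fun y => (p.2.2.1 y y.2).symm))

section Path

variable {n : ℕ} (e : Fin n ≃ S)

/-- Walks along `e 0, e 1, …, e (n - 1)` and stays at the last vertex, which becomes the root. -/
def pathSucc (y : S) : S :=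
  e ⟨min (e.symm y + 1) (n - 1), by have := (e.symm y).isLt; omega⟩

theorem pathSucc_apply (i : Fin n) :
    pathSucc e (e i) = e ⟨min (i + 1) (n - 1), by have := i.isLt; omega⟩ := by
  simp only [pathSucc, Equiv.symm_apply_apply]

theorem pathSucc_iterate (i : Fin n) (k : ℕ) :
    (pathSucc e)^[k] (e i) = e ⟨min (i + k) (n - 1), by have := i.isLt; omega⟩ := by
  induction k with
  | zero => exact congrArg e (Fin.ext (by have := i.isLt; simp; omega))
  | succ k ih =>
    rw [iterate_succ_apply', ih, pathSucc_apply]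
    exact congrArg e (Fin.ext (by simp; omega))

theorem glue_pathSucc_iterate (g : α → α) (i : Fin n) (k : ℕ) :
    (glue S (pathSucc e) g)^[k] (e i) =
      (e ⟨min (i + k) (n - 1), by have := i.isLt; omega⟩ : α) := by
  rw [← semiconj_glue.iterate_right k (e i), pathSucc_iterate]

theorem glue_pathSucc_iterate_zero (g : α → α) (i : Fin n) :
    (glue S (pathSucc e) g)^[i] (e ⟨0, i.pos⟩) = e i := by
  rw [glue_pathSucc_iterate]
  exact congrArg (fun i => (e i : α)) (Fin.ext (by have := i.isLt; simp; omega))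

theorem isRootedAt_glue_pathSucc (hn : 0 < n) (g : RootedForest S) :
    IsRootedAt (glue S (pathSucc e) g.1) (e ⟨n - 1, by omega⟩) := by
  refine ⟨?_, fun x => ?_⟩
  · rw [IsFixedPt, glue_of_mem (e _).2, Subtype.coe_eta, pathSucc_apply]
    exact congrArg (fun i => (e i : α)) (Fin.ext (by simp))
  · obtain ⟨k, hk⟩ := exists_iterate_glue_mem (u := pathSucc e) (g.2.2 x)
    refine ⟨n + k, ?_⟩
    rw [iterate_add_apply, ← Subtype.coe_mk _ hk, ← e.apply_symm_apply ⟨_, hk⟩,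
      glue_pathSucc_iterate]
    exact congrArg (fun i => (e i : α)) (Fin.ext (by simp; omega))

theorem range_glue_pathSucc_iterate (hn : 0 < n) (g : α → α) :
    range (fun k => (glue S (pathSucc e) g)^[k] (e ⟨0, hn⟩)) = S := by
  ext y
  refine ⟨?_, fun hy => ⟨e.symm ⟨y, hy⟩, ?_⟩⟩
  · rintro ⟨k, rfl⟩
    exact mapsTo_glue.iterate k (e _).2
  · simp only [glue_pathSucc_iterate_zero, Equiv.apply_symm_apply]

end Path

noncomputable def orbitFiberEquiv [Finite α] [Nonempty α] (S : Set α) :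
    {x : α × RootedMap α // range (fun k => x.2.2.1^[k] x.1) = S} ≃
      (Fin (Nat.card S) ≃ S) × RootedForest S where
  toFun := fun ⟨(a, ⟨_, f, hf⟩), hS⟩ => (Equiv.ofBijective _ (hf.bijective_iterate hS),
    .collapse f fun y => by simpa only [hS] using hf.exists_iterate_mem_range a y)
  invFun := fun (e, g) =>
    ⟨(e ⟨0, g.card_pos⟩, ⟨_, _, isRootedAt_glue_pathSucc e g.card_pos g⟩),
      range_glue_pathSucc_iterate e g.card_pos _⟩
  left_inv := by
    rintro ⟨⟨a, r, f, hf⟩, hS⟩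
    subst hS
    refine Subtype.ext (Prod.ext rfl (Sigma.subtype_ext (hf.iterate_card_range_sub_one a) ?_))
    refine glue_glue.trans (glue_eq_self fun y => ?_)
    obtain ⟨i, hi⟩ := (Equiv.ofBijective _ (hf.bijective_iterate rfl)).surjective y
    rw [← hi, pathSucc_apply]
    exact (hf.iterate_eq_iterate_min (hf.iterate_card_range_sub_one a) (i + 1)).symm.trans
      (iterate_succ_apply' f i a)
  right_inv := by
    rintro ⟨e, g⟩
    refine Prod.ext (Equiv.ext fun i => Subtype.ext ?_)
      (Subtype.ext <| glue_glue.trans (glue_eq_self fun y => (g.2.1 y y.2).symm))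
    exact glue_pathSucc_iterate_zero e g.1 i

noncomputable def funEquivProdRootedMap [Finite α] [Nonempty α] :
    (α → α) ≃ α × RootedMap α :=
  (Equiv.sigmaFiberEquiv periodicPts).symm.trans <|
    (Equiv.sigmaCongrRight fun S => (periodicPtsFiberEquiv S).trans <|
      (((Finite.equivFin S).equivCongr (Equiv.refl S)).prodCongr (Equiv.refl _)).trans
        (orbitFiberEquiv S).symm).trans
    (Equiv.sigmaFiberEquiv fun x : α × RootedMap α => range fun k => x.2.2.1^[k] x.1)

end Function

namespace SimpleGraph

variable {V : Type*} {f g : V → V} {r v : V}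

def fromFun (f : V → V) : SimpleGraph V := fromRel (f · = ·)

@[simp]
theorem fromFun_adj {w : V} : (fromFun f).Adj v w ↔ v ≠ w ∧ (f v = w ∨ f w = v) :=
  fromRel_adj _ _ _

theorem _root_.Function.IsRootedAt.fromFun_adj_apply (hf : IsRootedAt f r) (hv : v ≠ r) :
    (fromFun f).Adj v (f v) :=
  fromFun_adj.2 ⟨(hf.apply_ne hv).symm, .inl rfl⟩

theorem _root_.Function.IsRootedAt.connected_fromFun (hf : IsRootedAt f r) :
    (fromFun f).Connected := by
  refine (connected_iff_exists_forall_reachable _).2 ⟨r, fun v => ?_⟩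
  obtain ⟨k, hk⟩ := hf.2 v
  induction k generalizing v with
  | zero => exact hk ▸ Reachable.refl v
  | succ k ih =>
    obtain rfl | hv := eq_or_ne v r
    · rfl
    · exact (ih _ hk).trans (hf.fromFun_adj_apply hv).reachable.symm

theorem _root_.Function.IsRootedAt.card_edgeSet_fromFun [Finite V] (hf : IsRootedAt f r) :
    Nat.card (fromFun f).edgeSet + 1 = Nat.card V := by
  let e : {v // v ≠ r} → (fromFun f).edgeSet := fun v =>
    ⟨s(v, f v), hf.fromFun_adj_apply v.2⟩
  have he : Bijective e := by
    refine ⟨fun v w hvw => Subtype.ext ?_, ?_⟩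
    · obtain ⟨h, -⟩ | ⟨h, h'⟩ := Sym2.eq_iff.1 (congrArg Subtype.val hvw)
      · exact h
      · exact absurd (hf.eq_of_apply_apply_eq (by rw [h', h])) v.2
    · rintro ⟨e, he⟩
      induction e using Sym2.ind with
      | h v w =>
        rw [mem_edgeSet] at he
        obtain ⟨hne, rfl | rfl⟩ := fromFun_adj.1 he
        · refine ⟨⟨v, fun hv => hne ?_⟩, rfl⟩
          rw [hv, hf.1]
        · refine ⟨⟨w, fun hw => hne ?_⟩, Subtype.ext Sym2.eq_swap⟩
          rw [hw, hf.1]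
  classical
  have := Fintype.ofFinite V
  rw [← Nat.card_congr (Equiv.ofBijective e he)]
  simp only [Nat.card_eq_fintype_card, Fintype.card_subtype_compl, Fintype.card_unique]
  have := Fintype.card_pos_iff.2 ⟨r⟩
  omega

theorem _root_.Function.IsRootedAt.isTree_fromFun [Finite V] (hf : IsRootedAt f r) :
    (fromFun f).IsTree :=
  isTree_iff_connected_and_card.2 ⟨hf.connected_fromFun, hf.card_edgeSet_fromFun⟩

theorem _root_.Function.IsRootedAt.eq_of_fromFun_eq (hf : IsRootedAt f r) (hg : IsRootedAt g r)
    (h : fromFun f = fromFun g) : f = g := by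
  funext v
  obtain ⟨k, hk⟩ := hf.2 v
  induction k generalizing v with
  | zero => rw [show v = r from hk, hf.1, hg.1]
  | succ k ih =>
    obtain rfl | hv := eq_or_ne v r
    · rw [hf.1, hg.1]
    obtain ⟨-, h1 | h1⟩ := fromFun_adj.1 (h ▸ hf.fromFun_adj_apply hv)
    · exact h1.symm
    · exact absurd (hf.eq_of_apply_apply_eq ((ih _ hk).trans h1)) hv

variable {T : SimpleGraph V}

noncomputable def IsTree.parent (hT : T.IsTree) (r v : V) : V :=
  (hT.existsUnique_path v r).exists.choose.snd

theorem IsTree.parent_eq (hT : T.IsTree) {W : T.Walk v r} (hW : W.IsPath) :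
    hT.parent r v = W.snd := by
  rw [parent, (hT.existsUnique_path v r).unique (hT.existsUnique_path v r).exists.choose_spec hW]

theorem IsTree.adj_parent (hT : T.IsTree) (hv : v ≠ r) : T.Adj v (hT.parent r v) := by
  obtain ⟨W, hW⟩ := (hT.existsUnique_path v r).exists
  rw [hT.parent_eq hW]
  exact W.adj_snd (Walk.not_nil_of_ne hv)

theorem IsTree.isRootedAt_parent (hT : T.IsTree) (r : V) : IsRootedAt (hT.parent r) r := by
  refine ⟨hT.parent_eq (Walk.IsPath.nil (u := r)), fun v => ?_⟩
  obtain ⟨W, hW⟩ := (hT.existsUnique_path v r).exists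
  refine ⟨W.length, ?_⟩
  induction W with
  | nil => rfl
  | cons h W ih =>
    rw [Walk.length_cons, iterate_succ_apply, hT.parent_eq hW, Walk.snd_cons]
    exact ih hW.of_cons

theorem IsTree.fromFun_parent_le (hT : T.IsTree) (r : V) : fromFun (hT.parent r) ≤ T := by
  rintro v w ⟨hne, h | h⟩ <;> subst h
  · refine hT.adj_parent fun hv => hne ?_
    rw [hv, (hT.isRootedAt_parent r).1]
  · refine (hT.adj_parent fun hw => hne ?_).symm
    rw [hw, (hT.isRootedAt_parent r).1]

theorem IsTree.fromFun_parent [Finite V] (hT : T.IsTree) (r : V) : fromFun (hT.parent r) = T := by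
  have hcard := (isTree_iff_connected_and_card.1 hT).2
  rw [← (hT.isRootedAt_parent r).card_edgeSet_fromFun, Nat.card_coe_set_eq,
    Nat.card_coe_set_eq, add_left_inj] at hcard
  exact edgeSet_inj.1 <| Set.eq_of_subset_of_ncard_le (edgeSet_mono (hT.fromFun_parent_le r))
    hcard.le (Set.toFinite _)

noncomputable def treeEquivRootedAt [Finite V] (r : V) :
    {T : SimpleGraph V // T.IsTree} ≃ {f : V → V // IsRootedAt f r} where
  toFun T := ⟨T.2.parent r, T.2.isRootedAt_parent r⟩
  invFun f := ⟨fromFun f.1, f.2.isTree_fromFun⟩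
  left_inv T := Subtype.ext (T.2.fromFun_parent r)
  right_inv f := Subtype.ext <| (f.2.isTree_fromFun.isRootedAt_parent r).eq_of_fromFun_eq f.2
    (f.2.isTree_fromFun.fromFun_parent r)

end SimpleGraph

theorem stmt_6 (n : ℕ) (hn : 1 ≤ n) :
    Nat.card {T : SimpleGraph (Fin n) // T.IsTree} = n ^ (n - 2) := by
  have : Nonempty (Fin n) := ⟨⟨0, hn⟩⟩
  have hcard := Nat.card_congr <| funEquivProdRootedMap.trans <|
    (Equiv.refl (Fin n)).prodCongr <|
      (Equiv.sigmaCongrRight fun r => (SimpleGraph.treeEquivRootedAt r).symm).trans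
        (Equiv.sigmaEquivProd _ _)
  simp only [Nat.card_prod, Nat.card_eq_fintype_card, Fintype.card_fun, Fintype.card_fin]
    at hcard
  have hpow : n ^ n = n * (n * n ^ (n - 2)) := by
    obtain _ | _ | m := n
    · omega
    · rfl
    · rw [show m + 1 + 1 - 2 = m by omega, ← pow_succ', ← pow_succ']
  exact Nat.eq_of_mul_eq_mul_left hn (Nat.eq_of_mul_eq_mul_left hn (hcard.symm.trans hpow))
end

section
/- For n ≥ 2, the number of labeled trees on {1,...,n} in which every vertex has odd degree equals (1/2^n) ∑_{k=0}^{n} C(n,k) (2k - n)^{n-2}. -/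
/-!
A tree on `n ≥ 2` labelled vertices in which vertex `i` has degree `c i + 1` has a leaf; deleting it
lowers the degree of its neighbour by one, and this recursion gives the degree-sequence form of
Cayley's formula: there are `multinomial c = (n - 2)! / ∏ i, (c i)!` such trees. The odd trees are
those with every `c i` even. On the other side, `2 k - n` is the sum of a `±1` pattern with `k` plus
signs; expanding `(∑ i, ε i) ^ (n - 2)` multinomially and summing over all `2 ^ n` patterns `ε`
kills every term with an odd exponent and multiplies the others by `2 ^ n`.
-/

open Finset
open scoped Nat

namespace Finset

lemma exists_eq_zero_of_sum_lt_card {ι : Type*} {s : Finset ι} {c : ι → ℕ}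
    (h : ∑ i ∈ s, c i < #s) : ∃ i ∈ s, c i = 0 := by
  by_contra! hc
  have := s.card_nsmul_le_sum c 1 fun i hi ↦ Nat.one_le_iff_ne_zero.mpr (hc i hi)
  rw [smul_eq_mul, mul_one] at this
  exact lt_irrefl _ (this.trans_lt h)

@[to_additive]
lemma mul_prod_comp_update {ι α M : Type*} [CommMonoid M] [DecidableEq ι] {s : Finset ι} {a : ι}
    (ha : a ∈ s) (g : ι → α) (f : α → M) (b : α) :
    f (g a) * ∏ i ∈ s, f (Function.update g a b i) = f b * ∏ i ∈ s, f (g i) := by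
  have hrest : ∏ i ∈ s.erase a, f (Function.update g a b i) = ∏ i ∈ s.erase a, f (g i) :=
    prod_congr rfl fun i hi ↦ by rw [Function.update_of_ne (ne_of_mem_erase hi)]
  rw [← mul_prod_erase s _ ha, ← mul_prod_erase s (fun i ↦ f (g i)) ha, hrest,
    Function.update_self, mul_left_comm]

lemma prod_factorial_eq_mul_prod_factorial_update {ι : Type*} [DecidableEq ι] {s : Finset ι}
    {c : ι → ℕ} {a : ι} (ha : a ∈ s) (hca : c a ≠ 0) :
    ∏ i ∈ s, (c i)! = c a * ∏ i ∈ s, (Function.update c a (c a - 1) i)! := by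
  have h := mul_prod_comp_update ha c Nat.factorial (c a - 1)
  rw [← Nat.mul_factorial_pred hca, mul_assoc, mul_left_comm] at h
  exact (Nat.eq_of_mul_eq_mul_left (Nat.factorial_pos _) h).symm

end Finset

section SignSums

variable {ι R : Type*} [Fintype ι] [DecidableEq ι] [CommRing R]

lemma sum_ite_mem_one_neg_one (A : Finset ι) :
    ∑ i, (if i ∈ A then 1 else -1 : R) = 2 * #A - Fintype.card ι := by
  have h : ∀ i, (if i ∈ A then 1 else -1 : R) = 2 * (if i ∈ A then 1 else 0) - 1 := fun i ↦ by
    split_ifs <;> ring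
  simp only [h, sum_sub_distrib, ← mul_sum, sum_boole, filter_mem_eq_inter, univ_inter,
    sum_const, card_univ, nsmul_eq_mul, mul_one]

lemma sum_powerset_prod_ite_mem_pow (c : ι → ℕ) :
    ∑ A ∈ univ.powerset, ∏ i, (if i ∈ A then 1 else -1 : R) ^ c i =
      if ∀ i, Even (c i) then 2 ^ Fintype.card ι else 0 := by
  have hsplit : ∀ A ∈ (univ : Finset ι).powerset, ∏ i, (if i ∈ A then 1 else -1 : R) ^ c i =
      (∏ i ∈ A, 1 ^ c i) * ∏ i ∈ univ \ A, (-1) ^ c i := fun A _ ↦ by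
    rw [← prod_sdiff (subset_univ A), mul_comm]
    congr 1 <;> refine prod_congr rfl fun i hi ↦ ?_
    · rw [if_pos hi]
    · rw [if_neg (mem_sdiff.mp hi).2]
  rw [sum_congr rfl hsplit, ← prod_add]
  split_ifs with heven
  · rw [prod_congr rfl fun i _ ↦ by rw [one_pow, (heven i).neg_one_pow, one_add_one_eq_two],
      prod_const, card_univ]
  · push Not at heven
    obtain ⟨i, hi⟩ := heven
    exact prod_eq_zero (mem_univ i) (by rw [one_pow, (Nat.not_even_iff_odd.mp hi).neg_one_pow,
      add_neg_cancel])

theorem sum_choose_mul_two_mul_sub_pow (m : ℕ) :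
    ∑ k ∈ range (Fintype.card ι + 1),
        ((Fintype.card ι).choose k : R) * (2 * k - Fintype.card ι) ^ m =
      2 ^ Fintype.card ι *
        ∑ c ∈ piAntidiag (univ : Finset ι) m with ∀ i, Even (c i), (Nat.multinomial univ c : R) := by
  calc ∑ k ∈ range (Fintype.card ι + 1),
        ((Fintype.card ι).choose k : R) * (2 * k - Fintype.card ι) ^ m
      = ∑ A ∈ (univ : Finset ι).powerset, (∑ i, (if i ∈ A then 1 else -1 : R)) ^ m := by
        simp only [sum_ite_mem_one_neg_one]
        rw [sum_powerset_apply_card (fun k ↦ (2 * (k : R) - Fintype.card ι) ^ m)]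
        simp
    _ = ∑ c ∈ piAntidiag (univ : Finset ι) m, (Nat.multinomial univ c : R) *
          ∑ A ∈ (univ : Finset ι).powerset, ∏ i, (if i ∈ A then 1 else -1 : R) ^ c i := by
        simp_rw [sum_pow_eq_sum_piAntidiag, mul_sum]
        exact sum_comm
    _ = _ := by
        simp only [sum_powerset_prod_ite_mem_pow, mul_ite, mul_zero, ← sum_filter, mul_sum]
        exact sum_congr rfl fun c _ ↦ mul_comm _ _

end SignSums

namespace SimpleGraph

variable {V : Type*} {T : SimpleGraph V} {s : Set V} {u v : V}

structure IsTreeOn (T : SimpleGraph V) (s : Set V) : Prop where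
  support_subset : T.support ⊆ s
  reachable : ∀ ⦃a⦄, a ∈ s → ∀ ⦃b⦄, b ∈ s → T.Reachable a b
  isAcyclic : T.IsAcyclic

lemma isTreeOn_univ_iff [Nonempty V] : T.IsTreeOn Set.univ ↔ T.IsTree := by
  rw [isTree_iff, connected_iff]
  exact ⟨fun h ↦ ⟨⟨fun a b ↦ h.reachable trivial trivial, ‹_›⟩, h.isAcyclic⟩,
    fun h ↦ ⟨Set.subset_univ _, fun a _ b _ ↦ h.1.1 a b, h.2⟩⟩

lemma isTreeOn_singleton_bot (a : V) : (⊥ : SimpleGraph V).IsTreeOn {a} :=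
  ⟨by simp, by rintro _ rfl _ rfl; rfl, isAcyclic_bot⟩

lemma Reachable.mem_support_of_ne {a b : V} (h : T.Reachable a b) (hab : a ≠ b) :
    a ∈ T.support := by
  obtain ⟨p⟩ := h
  exact ⟨_, p.adj_snd (p.not_nil_of_ne hab)⟩

lemma IsTreeOn.neighborSet_nonempty (h : T.IsTreeOn s) {a b : V} (ha : a ∈ s) (hb : b ∈ s)
    (hab : a ≠ b) : (T.neighborSet a).Nonempty :=
  (h.reachable ha hb).mem_support_of_ne hab

lemma Walk.IsPath.eq_or_eq_of_neighborSet_eq_singleton {a b : V} {p : T.Walk a b}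
    (hp : p.IsPath) (hv : T.neighborSet v = {u}) (hmem : v ∈ p.support) : v = a ∨ v = b := by
  obtain ⟨i, rfl, hi⟩ := Walk.mem_support_iff_exists_getVert.mp hmem
  by_contra! hne
  have h0 : i ≠ 0 := by rintro rfl; exact hne.1 p.getVert_zero
  have hlen : i < p.length := lt_of_le_of_ne hi (by rintro rfl; exact hne.2 p.getVert_length)
  have hprev : p.getVert (i - 1) = u := by
    have := p.adj_getVert_succ (i := i - 1) (by omega)
    rw [Nat.sub_add_cancel (by omega)] at this
    simpa [hv] using (show p.getVert (i - 1) ∈ T.neighborSet (p.getVert i) from this.symm)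
  have hnext : p.getVert (i + 1) = u := by
    simpa [hv] using (show p.getVert (i + 1) ∈ T.neighborSet (p.getVert i) from
      p.adj_getVert_succ hlen)
  have := hp.getVert_injOn (by simp; omega) (by simp; omega) (hprev.trans hnext.symm)
  omega

lemma IsTreeOn.sup_edge (h : T.IsTreeOn s) (hu : u ∈ s) (hv : v ∉ s) :
    (T ⊔ edge u v).IsTreeOn (insert v s) := by
  have huv : u ≠ v := by rintro rfl; exact hv hu
  have hreach : ∀ a ∈ insert v s, (T ⊔ edge u v).Reachable a u := by
    rintro a (rfl | ha)
    · exact Adj.reachable (Or.inr (by simp [edge_adj, huv.symm]))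
    · exact (h.reachable ha hu).mono le_sup_left
  refine ⟨?_, fun a ha b hb ↦ (hreach a ha).trans (hreach b hb).symm, ?_⟩
  · rintro a ⟨b, hab | hab⟩
    · exact Or.inr (h.support_subset ⟨b, hab⟩)
    · rw [edge_adj] at hab
      rcases hab.1 with ⟨rfl, -⟩ | ⟨rfl, -⟩
      exacts [Or.inr hu, Or.inl rfl]
  · refine h.isAcyclic.sup_edge_of_not_reachable fun huv' ↦ hv ?_
    exact h.support_subset (huv'.symm.mem_support_of_ne huv.symm)

lemma IsTreeOn.deleteIncidenceSet (h : T.IsTreeOn s) (hv : T.neighborSet v = {u}) :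
    (T.deleteIncidenceSet v).IsTreeOn (s \ {v}) := by
  refine ⟨(T.support_deleteIncidenceSet_subset v).trans (Set.sdiff_subset_sdiff_left
    h.support_subset), fun a ha b hb ↦ ?_, h.isAcyclic.anti (T.deleteIncidenceSet_le v)⟩
  obtain ⟨p, hp⟩ := (h.reachable ha.1 hb.1).exists_isPath
  have hvp : v ∉ p.support := fun hmem ↦ by
    rcases hp.eq_or_eq_of_neighborSet_eq_singleton hv hmem with rfl | rfl
    exacts [ha.2 rfl, hb.2 rfl]
  refine ⟨p.toDeleteEdges _ fun e he hev ↦ hvp ?_⟩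
  induction e using Sym2.ind with
  | _ x y =>
    rcases Sym2.mem_iff.mp hev.2 with rfl | rfl
    exacts [p.fst_mem_support_of_mem_edges he, p.snd_mem_support_of_mem_edges he]

lemma sup_edge_deleteIncidenceSet (hv : T.neighborSet v = {u}) :
    T.deleteIncidenceSet v ⊔ edge u v = T := by
  ext a b
  have hvu : ∀ w, T.Adj v w ↔ w = u := fun w ↦ Set.ext_iff.mp hv w
  simp only [sup_adj, deleteIncidenceSet_adj, edge_adj]
  constructor
  · rintro (⟨h, -⟩ | ⟨⟨rfl, rfl⟩ | ⟨rfl, rfl⟩, -⟩)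
    exacts [h, ((hvu _).mpr rfl).symm, (hvu _).mpr rfl]
  · intro h
    by_cases ha : a = v
    · subst ha; exact Or.inr ⟨Or.inr ⟨rfl, (hvu b).mp h⟩, h.ne⟩
    by_cases hb : b = v
    · subst hb; exact Or.inr ⟨Or.inl ⟨(hvu a).mp h.symm, rfl⟩, h.ne⟩
    exact Or.inl ⟨h, ha, hb⟩

lemma deleteIncidenceSet_sup_edge (hv : v ∉ T.support) :
    (T ⊔ edge u v).deleteIncidenceSet v = T := by
  ext a b
  simp only [deleteIncidenceSet_adj, sup_adj, edge_adj]
  constructor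
  · rintro ⟨h | ⟨⟨rfl, rfl⟩ | ⟨rfl, rfl⟩, -⟩, ha, hb⟩
    exacts [h, absurd rfl hb, absurd rfl ha]
  · intro h
    exact ⟨Or.inl h, fun hav ↦ hv ⟨b, hav ▸ h⟩, fun hbv ↦ hv ⟨a, hbv ▸ h.symm⟩⟩

lemma neighborSet_sup_edge_right (hv : v ∉ T.support) (huv : u ≠ v) :
    (T ⊔ edge u v).neighborSet v = {u} := by
  ext w
  simp only [mem_neighborSet, sup_adj, edge_adj, Set.mem_singleton_iff]
  have : ¬ T.Adj v w := fun h ↦ hv ⟨w, h⟩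
  aesop

lemma ncard_neighborSet_sup_edge [Finite V] [DecidableEq V] (hv : v ∉ T.support) (huv : u ≠ v)
    (i : V) :
    ((T ⊔ edge u v).neighborSet i).ncard =
      (T.neighborSet i).ncard + if i = u ∨ i = v then 1 else 0 := by
  by_cases hiv : i = v
  · subst hiv
    have : T.neighborSet i = ∅ := Set.eq_empty_of_forall_notMem fun w h ↦ hv ⟨w, h⟩
    simp [neighborSet_sup_edge_right hv huv, this]
  rw [neighborSet_sup]
  by_cases hiu : i = u
  · subst hiu
    have : (edge i v).neighborSet i = {v} := by
      ext w; simp only [mem_neighborSet, edge_adj, Set.mem_singleton_iff]; grind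
    rw [this, Set.union_singleton, Set.ncard_insert_of_notMem fun h ↦ hv ⟨i, h.symm⟩]
    simp
  · have : (edge u v).neighborSet i = ∅ := by ext; simp [edge_adj, hiu, hiv]
    simp [this, hiu, hiv]

section Fintype

variable [Fintype V]

lemma IsTree.one_le_ncard_neighborSet [Nontrivial V] (h : T.IsTree) (i : V) :
    1 ≤ (T.neighborSet i).ncard := by
  obtain ⟨j, hji⟩ := exists_ne i
  exact ((isTreeOn_univ_iff.mpr h).neighborSet_nonempty trivial trivial hji.symm).ncard_pos

lemma IsTree.sum_ncard_neighborSet (h : T.IsTree) :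
    ∑ i, (T.neighborSet i).ncard = 2 * (Fintype.card V - 1) := by
  classical
  have hdeg : ∀ i, (T.neighborSet i).ncard = T.degree i := fun i ↦ by
    rw [← card_neighborSet_eq_degree, Set.ncard_eq_toFinset_card', Set.toFinset_card]
  simp only [hdeg, sum_degrees_eq_twice_card_edges, ← h.card_edgeFinset, add_tsub_cancel_right]

lemma IsTree.sum_ncard_neighborSet_sub_one [Nontrivial V] (h : T.IsTree) :
    ∑ i, ((T.neighborSet i).ncard - 1) = Fintype.card V - 2 := by
  have hsum : ∑ i, ((T.neighborSet i).ncard - 1) + Fintype.card V =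
      ∑ i, (T.neighborSet i).ncard := by
    rw [← card_univ, card_eq_sum_ones, ← sum_add_distrib]
    exact sum_congr rfl fun i _ ↦ Nat.sub_add_cancel (h.one_le_ncard_neighborSet i)
  have := Fintype.one_lt_card_iff_nontrivial.mpr ‹Nontrivial V›
  rw [h.sum_ncard_neighborSet] at hsum
  omega

end Fintype

section Counting

variable [Fintype V] [DecidableEq V]

open scoped Classical

noncomputable def treesOnWithDegrees (s : Finset V) (d : V → ℕ) : Finset (SimpleGraph V) :=
  {T | T.IsTreeOn s ∧ ∀ i ∈ s, (T.neighborSet i).ncard = d i}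

lemma mem_treesOnWithDegrees {s : Finset V} {d : V → ℕ} :
    T ∈ treesOnWithDegrees s d ↔ T.IsTreeOn s ∧ ∀ i ∈ s, (T.neighborSet i).ncard = d i := by
  simp [treesOnWithDegrees]

lemma treesOnWithDegrees_singleton {a : V} {d : V → ℕ} (hd : d a = 0) :
    treesOnWithDegrees {a} d = {⊥} := by
  ext T
  simp only [mem_treesOnWithDegrees, coe_singleton, mem_singleton, forall_eq, hd]
  refine ⟨fun ⟨h, _⟩ ↦ ?_, ?_⟩
  · ext x y
    refine ⟨fun hxy ↦ hxy.ne ?_, False.elim⟩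
    rw [h.support_subset ⟨y, hxy⟩, h.support_subset ⟨x, hxy.symm⟩]
  · rintro rfl
    simp [isTreeOn_singleton_bot]

lemma treesOnWithDegrees_eq_empty {s : Finset V} {d : V → ℕ} {a b : V} (ha : a ∈ s) (hb : b ∈ s)
    (hab : a ≠ b) (hd : d a = 0) : treesOnWithDegrees s d = ∅ := by
  refine eq_empty_of_forall_notMem fun T hT ↦ ?_
  rw [mem_treesOnWithDegrees] at hT
  have := (hT.1.neighborSet_nonempty (mem_coe.mpr ha) (mem_coe.mpr hb) hab).ncard_pos
  rw [hT.2 a ha, hd] at this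
  exact this.false

lemma card_filter_neighborSet_eq_singleton {s : Finset V} {d : V → ℕ} (hv : v ∉ s) (hu : u ∈ s)
    (hdv : d v = 1) (hdu : 1 ≤ d u) :
    #{T ∈ treesOnWithDegrees (insert v s) d | T.neighborSet v = {u}} =
      #(treesOnWithDegrees s (Function.update d u (d u - 1))) := by
  have huv : u ≠ v := by rintro rfl; exact hv hu
  have hdeg : ∀ T' : SimpleGraph V, v ∉ T'.support → ∀ i ∈ s,
      ((T' ⊔ edge u v).neighborSet i).ncard = d i ↔
        (T'.neighborSet i).ncard = Function.update d u (d u - 1) i := by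
    intro T' hT' i hi
    have hiv : i ≠ v := by rintro rfl; exact hv hi
    rw [ncard_neighborSet_sup_edge hT' huv]
    by_cases hiu : i = u
    · subst hiu; simp; omega
    · simp [hiu, hiv]
  have hsupp : ∀ {T' : SimpleGraph V}, T'.IsTreeOn s → v ∉ T'.support :=
    fun hT' hvT' ↦ hv (hT'.support_subset hvT')
  refine card_nbij' (·.deleteIncidenceSet v) (· ⊔ edge u v) ?_ ?_ ?_ ?_
  · intro T hT
    simp only [coe_filter, mem_treesOnWithDegrees, Set.mem_ofPred_eq] at hT
    obtain ⟨⟨hTree, hTdeg⟩, hTv⟩ := hT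
    have hTree' := hTree.deleteIncidenceSet hTv
    rw [coe_insert, Set.insert_sdiff_self_of_notMem (by simpa)] at hTree'
    refine mem_coe.mpr (mem_treesOnWithDegrees.mpr ⟨hTree', fun i hi ↦ ?_⟩)
    refine (hdeg _ (hsupp hTree') i hi).mp ?_
    rw [sup_edge_deleteIncidenceSet hTv]
    exact hTdeg i (mem_insert_of_mem hi)
  · intro T' hT'
    obtain ⟨hTree', hT'deg⟩ := mem_treesOnWithDegrees.mp (mem_coe.mp hT')
    simp only [coe_filter, mem_treesOnWithDegrees, Set.mem_ofPred_eq, forall_mem_insert]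
    refine ⟨⟨by simpa using hTree'.sup_edge hu hv, ?_, fun i hi ↦
      (hdeg _ (hsupp hTree') i hi).mpr (hT'deg i hi)⟩, neighborSet_sup_edge_right (hsupp hTree') huv⟩
    simp [neighborSet_sup_edge_right (hsupp hTree') huv, hdv]
  · intro T hT
    simp only [coe_filter, Set.mem_ofPred_eq] at hT
    exact sup_edge_deleteIncidenceSet hT.2
  · intro T' hT'
    exact deleteIncidenceSet_sup_edge (hsupp (mem_treesOnWithDegrees.mp (mem_coe.mp hT')).1)

lemma card_treesOnWithDegrees_insert {s : Finset V} {d : V → ℕ} (hv : v ∉ s) (hdv : d v = 1)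
    (hd : ∀ u ∈ s, 1 ≤ d u) :
    #(treesOnWithDegrees (insert v s) d) =
      ∑ u ∈ s, #(treesOnWithDegrees s (Function.update d u (d u - 1))) := by
  have hcover : treesOnWithDegrees (insert v s) d = s.biUnion fun u ↦
      {T ∈ treesOnWithDegrees (insert v s) d | T.neighborSet v = {u}} := by
    ext T
    simp only [mem_biUnion, mem_filter]
    refine ⟨fun hT ↦ ?_, fun ⟨u, _, hT, _⟩ ↦ hT⟩
    obtain ⟨hTree, hTdeg⟩ := mem_treesOnWithDegrees.mp hT
    obtain ⟨u, hu⟩ := Set.ncard_eq_one.mp ((hTdeg v (mem_insert_self v s)).trans hdv)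
    have hvu : T.Adj v u := by simp [← mem_neighborSet, hu]
    have hus : u ∈ insert v s := hTree.support_subset ⟨v, hvu.symm⟩
    exact ⟨u, (mem_insert.mp hus).resolve_left hvu.ne', hT, hu⟩
  rw [hcover, card_biUnion]
  · exact sum_congr rfl fun u hu ↦ card_filter_neighborSet_eq_singleton hv hu hdv (hd u hu)
  · intro u _ w _ huw
    exact disjoint_filter.mpr fun T _ hu hw ↦ huw (Set.singleton_injective (hu.symm.trans hw))

theorem card_treesOnWithDegrees_mul_prod_factorial {s : Finset V} {c : V → ℕ}
    (hs : #s = ∑ i ∈ s, c i + 2) :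
    #(treesOnWithDegrees s (c + 1)) * ∏ i ∈ s, (c i)! = (∑ i ∈ s, c i)! := by
  generalize hN : ∑ i ∈ s, c i = N at hs ⊢
  induction N using Nat.strong_induction_on generalizing s c with
  | _ N ih =>
  obtain ⟨v, hvs, hcv⟩ := exists_eq_zero_of_sum_lt_card (s := s) (c := c) (by omega)
  obtain ⟨s', hvs', rfl⟩ : ∃ s', v ∉ s' ∧ s = insert v s' :=
    ⟨s.erase v, notMem_erase v s, (insert_erase hvs).symm⟩
  rw [card_insert_of_notMem hvs'] at hs
  rw [sum_insert hvs', hcv, zero_add] at hN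
  rw [card_treesOnWithDegrees_insert hvs' (by simp [hcv]) (by simp), prod_insert hvs', hcv,
    Nat.factorial_zero, one_mul, sum_mul]
  simp only [Pi.add_apply, Pi.one_apply, add_tsub_cancel_right]
  cases N with
  | zero =>
    obtain ⟨u, rfl⟩ := card_eq_one.mp (by omega : #s' = 1)
    have hcu : c u = 0 := by simpa using hN
    rw [sum_singleton, treesOnWithDegrees_singleton (by simp [hcu])]
    simp [hcu]
  | succ N =>
    have hterm : ∀ u ∈ s', #(treesOnWithDegrees s' (Function.update (c + 1) u (c u))) *
        ∏ i ∈ s', (c i)! = c u * N ! := by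
      intro u hu
      rcases Nat.eq_zero_or_pos (c u) with hcu | hcu
      · obtain ⟨w, hw, hwu⟩ := exists_mem_ne (by omega : 1 < #s') u
        rw [treesOnWithDegrees_eq_empty hu hw hwu.symm (by simp [hcu]), hcu]
        simp
      set c' := Function.update c u (c u - 1)
      have hc' : Function.update (c + 1) u (c u) = c' + 1 := by
        ext i
        by_cases hiu : i = u
        · subst hiu; simp [c']; omega
        · simp [c', hiu]
      have hsum' : c u + ∑ i ∈ s', c' i = (c u - 1) + ∑ i ∈ s', c i :=
        add_sum_comp_update hu c id (c u - 1)
      rw [hc', prod_factorial_eq_mul_prod_factorial_update hu hcu.ne',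
        ← ih N (by omega) (s := s') (c := c') (by omega) (by omega)]
      ring
    rw [sum_congr rfl hterm, ← sum_mul, hN, Nat.factorial_succ]

theorem card_treesOnWithDegrees {s : Finset V} {c : V → ℕ} (hs : #s = ∑ i ∈ s, c i + 2) :
    #(treesOnWithDegrees s (c + 1)) = Nat.multinomial s c := by
  have h := Nat.multinomial_spec s c
  rw [← card_treesOnWithDegrees_mul_prod_factorial hs, mul_comm] at h
  exact (Nat.eq_of_mul_eq_mul_right (prod_pos fun i _ ↦ Nat.factorial_pos (c i)) h).symm

theorem natCard_isTree_forall_odd_eq_sum_multinomial (hV : 2 ≤ Fintype.card V) :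
    Nat.card {T : SimpleGraph V // T.IsTree ∧ ∀ i, Odd (T.neighborSet i).ncard} =
      ∑ c ∈ piAntidiag (univ : Finset V) (Fintype.card V - 2) with ∀ i, Even (c i),
        Nat.multinomial univ c := by
  have : Nontrivial V := Fintype.one_lt_card_iff_nontrivial.mp hV
  rw [Nat.card_eq_fintype_card, Fintype.card_subtype]
  refine (card_eq_sum_card_fiberwise (f := fun T i ↦ (T.neighborSet i).ncard - 1)
    fun T hT ↦ ?_).trans (sum_congr rfl fun c hc ↦ ?_)
  · obtain ⟨hTree, hodd⟩ := (mem_filter.mp hT).2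
    rw [mem_coe, mem_filter, mem_piAntidiag]
    exact ⟨⟨hTree.sum_ncard_neighborSet_sub_one, by simp⟩,
      fun i ↦ Nat.Odd.sub_odd (hodd i) odd_one⟩
  · rw [mem_filter] at hc
    have hsum : ∑ i, c i = Fintype.card V - 2 := (mem_piAntidiag.mp hc.1).1
    rw [← card_treesOnWithDegrees (by rw [card_univ]; omega)]
    congr 1
    ext T
    simp only [mem_filter, mem_univ, true_and, mem_treesOnWithDegrees, coe_univ,
      isTreeOn_univ_iff, Pi.add_apply, Pi.one_apply, funext_iff]
    refine ⟨fun ⟨⟨hTree, _⟩, hc'⟩ ↦ ⟨hTree, fun i _ ↦ ?_⟩,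
      fun ⟨hTree, hdeg⟩ ↦ ⟨⟨hTree, fun i ↦ ?_⟩, fun i ↦ ?_⟩⟩
    · have := hTree.one_le_ncard_neighborSet i
      have := hc' i
      omega
    · simpa [hdeg i] using (hc.2 i).add_one
    · simp [hdeg i]

end Counting

end SimpleGraph

theorem stmt_7 (n : ℕ) (hn : 2 ≤ n) :
    (Nat.card {T : SimpleGraph (Fin n) //
        T.IsTree ∧ ∀ i, Odd (Nat.card {j // T.Adj i j})} : ℚ) =
      (1 / 2 ^ n) *
        ∑ k ∈ Finset.range (n + 1), (n.choose k : ℚ) * (2 * (k : ℚ) - n) ^ (n - 2) := by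
  have hcount :=
    SimpleGraph.natCard_isTree_forall_odd_eq_sum_multinomial (V := Fin n) (by simpa using hn)
  have hsum := sum_choose_mul_two_mul_sub_pow (ι := Fin n) (R := ℚ) (n - 2)
  simp only [Fintype.card_fin] at hcount hsum
  rw [hsum, ← mul_assoc, one_div, inv_mul_cancel₀ (by positivity), one_mul]
  exact_mod_cast hcount
end

section
/- For n ≥ 2, the number of labeled trees on {1,...,n} with all vertex degrees odd equals the sum, over all tuples (k_1,...,k_n) of even natural numbers with k_1 + ... + k_n = n - 2, of the multinomial coefficients (n-2)!/(k_1! k_2! ⋯ k_n!). -/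
/-!
Deleting a leaf `v` from a tree leaves a tree on the other vertices in which only the degree of
the neighbour `j` of `v` has changed (it dropped by one), and attaching `v` to `j` again undoes
this. Hence the number of trees on `n` labelled vertices with degrees `k i + 1` satisfies Pascal's
recurrence for multinomial coefficients and equals `(n - 2)! / ∏ k i!`. Since the degrees of a
tree sum to `2n - 2`, a tree has all degrees odd exactly when its `k` is a tuple of even numbers
summing to `n - 2`.
-/

open Finset

namespace Nat

variable {α : Type*} [DecidableEq α]

lemma prod_factorial_mul_multinomial_update_pred {s : Finset α} {k : α → ℕ} {j : α}
    (hj : j ∈ s) (hkj : k j ≠ 0) :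
    (∏ i ∈ s, (k i)!) * multinomial s (Function.update k j (k j - 1)) =
      k j * (∑ i ∈ s, k i - 1)! := by
  have hsum : ∑ i ∈ s, Function.update k j (k j - 1) i = ∑ i ∈ s, k i - 1 := by
    rw [sum_update_of_mem hj, ← sum_erase_add _ _ hj, sdiff_singleton_eq_erase]
    omega
  have hprod : ∏ i ∈ s, (k i)! = k j * ∏ i ∈ s, (Function.update k j (k j - 1) i)! := by
    rw [← mul_prod_erase _ _ hj, ← mul_prod_erase _ _ hj, Function.update_self, ← mul_assoc,
      mul_factorial_pred hkj]
    congr 1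
    exact prod_congr rfl fun i hi => by rw [Function.update_of_ne (ne_of_mem_erase hi)]
  rw [hprod, mul_assoc, multinomial_spec, hsum]

theorem multinomial_eq_sum_multinomial_update_pred {s : Finset α} {k : α → ℕ}
    (h : ∑ i ∈ s, k i ≠ 0) :
    multinomial s k = ∑ j ∈ s with k j ≠ 0, multinomial s (Function.update k j (k j - 1)) := by
  apply Nat.eq_of_mul_eq_mul_left (prod_pos fun i _ => factorial_pos (k i))
  rw [multinomial_spec, mul_sum, sum_congr rfl fun j hj =>
    prod_factorial_mul_multinomial_update_pred (mem_filter.1 hj).1 (mem_filter.1 hj).2,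
    ← sum_mul, sum_filter_ne_zero, mul_factorial_pred h]

end Nat

section ComplSingleton

variable {α : Type*} [Fintype α] [DecidableEq α] {a : α}

@[to_additive]
lemma Fintype.prod_compl_singleton_of_eq_one {M : Type*} [CommMonoid M] {f : α → M}
    (ha : f a = 1) : ∏ x : ↥({a}ᶜ : Set α), f x = ∏ x, f x := by
  rw [prod_set_coe, Set.toFinset_compl, Set.toFinset_singleton, compl_singleton, prod_erase _ ha]

lemma Nat.multinomial_compl_singleton_of_eq_zero {f : α → ℕ} (ha : f a = 0) :
    multinomial univ (fun x : ↥({a}ᶜ : Set α) => f x) = multinomial univ f := by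
  rw [multinomial, multinomial, Fintype.sum_compl_singleton_of_eq_zero ha,
    Fintype.prod_compl_singleton_of_eq_one (f := fun x => (f x).factorial)
      (by rw [ha, factorial_zero])]

end ComplSingleton

lemma Set.natCard_compl_singleton_add_one {α : Type*} [Finite α] (a : α) :
    Nat.card ↥({a}ᶜ : Set α) + 1 = Nat.card α := by
  rw [Nat.card_coe_set_eq, ← Set.ncard_singleton a, Set.ncard_compl_add_ncard]

lemma Nat.card_exists_mem_eq_sum {α β : Type*} [Finite α] (s : Finset β) (q : β → α → Prop)
    (hq : ∀ a b₁ b₂, q b₁ a → q b₂ a → b₁ = b₂) :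
    Nat.card {a // ∃ b ∈ s, q b a} = ∑ b ∈ s, Nat.card {a // q b a} := by
  classical
  have := Fintype.ofFinite α
  simp only [Nat.card_eq_fintype_card, Fintype.card_subtype]
  rw [← card_biUnion fun b₁ _ b₂ _ hne => disjoint_filter.2 fun a _ h₁ h₂ => hne (hq a b₁ b₂ h₁ h₂)]
  congr 1
  ext a
  simp

lemma forall_add_ite_eq_add_one_iff {α : Type*} [DecidableEq α] {c k : α → ℕ} {j : α}
    (hj : k j ≠ 0) :
    (∀ i, c i + (if i = j then 1 else 0) = k i + 1) ↔
      ∀ i, c i = Function.update k j (k j - 1) i + 1 := by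
  refine forall_congr' fun i => ?_
  by_cases hi : i = j
  · subst hi
    simp only [if_true, Function.update_self]
    omega
  · simp [hi]

namespace SimpleGraph

variable {V : Type*} {v : V}

lemma adj_of_neighborSet_eq_singleton {G : SimpleGraph V} {j : V} (hv : G.neighborSet v = {j}) :
    G.Adj v j :=
  show j ∈ G.neighborSet v by rw [hv]; rfl

lemma Preconnected.card_neighborSet_pos [Finite V] [Nontrivial V] {G : SimpleGraph V}
    (h : G.Preconnected) (v : V) : 0 < Nat.card (G.neighborSet v) := by
  obtain ⟨u, hu⟩ := h.exists_adj_of_nontrivial v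
  have : Nonempty (G.neighborSet v) := ⟨⟨u, hu⟩⟩
  exact Nat.card_pos

lemma IsTree.sum_card_neighborSet [Fintype V] {T : SimpleGraph V} (hT : T.IsTree) :
    ∑ i, Nat.card (T.neighborSet i) + 2 = 2 * Nat.card V := by
  classical
  have h1 := T.sum_degrees_eq_twice_card_edges
  have h2 := hT.card_edgeFinset
  simp only [Nat.card_eq_fintype_card, card_neighborSet_eq_degree]
  omega

/-! `T'.spanningCoe ⊔ edge v j` is the graph `T'` on `{v}ᶜ` with `v` attached to `j` as a leaf. -/

lemma induce_compl_spanningCoe_sup_edge (T' : SimpleGraph ↥({v}ᶜ : Set V)) (j : V) :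
    (T'.spanningCoe ⊔ edge v j).induce {v}ᶜ = T' := by
  ext ⟨a, ha⟩ ⟨b, hb⟩
  rw [Set.mem_compl_singleton_iff] at ha hb
  simp [edge_adj, ha, hb]

lemma spanningCoe_induce_compl_sup_edge {T : SimpleGraph V} {j : V}
    (hv : T.neighborSet v = {j}) : (T.induce {v}ᶜ).spanningCoe ⊔ edge v j = T := by
  have hadj (w : V) : T.Adj v w ↔ w = j := Set.ext_iff.1 hv w
  have hj : v ≠ j := (adj_of_neighborSet_eq_singleton hv).ne
  ext a b
  by_cases ha : a = v <;> by_cases hb : b = v <;> simp_all [edge_adj, adj_comm _ _ v]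

lemma neighborSet_spanningCoe_sup_edge_self (T' : SimpleGraph ↥({v}ᶜ : Set V))
    (j : ↥({v}ᶜ : Set V)) : (T'.spanningCoe ⊔ edge v j).neighborSet v = {(j : V)} := by
  have hj : (j : V) ≠ v := j.2
  ext w
  simp +contextual [edge_adj, hj.symm]

lemma card_neighborSet_spanningCoe_sup_edge [Finite V] [DecidableEq V]
    (T' : SimpleGraph ↥({v}ᶜ : Set V)) (j w : ↥({v}ᶜ : Set V)) :
    Nat.card ((T'.spanningCoe ⊔ edge v j).neighborSet w) =
      Nat.card (T'.neighborSet w) + if w = j then 1 else 0 := by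
  have hw : (w : V) ≠ v := w.2
  have hedge : (edge v j).neighborSet w = if w = j then {v} else ∅ := by
    ext u
    split_ifs with h
    · subst h
      simp +contextual [edge_adj, hw]
    · simp [edge_adj, hw, Subtype.coe_inj, h]
  rw [neighborSet_sup, show T'.spanningCoe.neighborSet w = (↑) '' T'.neighborSet w from
    T'.neighborSet_map _ w, hedge]
  split_ifs
  · rw [Set.union_singleton, Nat.card_coe_set_eq, Set.ncard_insert_of_notMem (by simp),
      Set.ncard_image_of_injective _ Subtype.val_injective, Nat.card_coe_set_eq]
  · rw [Set.union_empty, Nat.card_coe_set_eq, Set.ncard_image_of_injective _ Subtype.val_injective,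
      Nat.card_coe_set_eq, add_zero]

lemma IsTree.induce_compl_singleton {T : SimpleGraph V} (hT : T.IsTree) {j : V}
    (hv : T.neighborSet v = {j}) : (T.induce {v}ᶜ).IsTree := by
  have hj : j ≠ v := (adj_of_neighborSet_eq_singleton hv).ne'
  refine ⟨(connected_iff _).2 ⟨hT.connected.preconnected.induce_of_degree_eq_one ?_, ⟨j, hj⟩⟩,
    hT.isAcyclic.induce _⟩
  intro w hw
  rw [Set.notMem_compl_iff, Set.mem_singleton_iff] at hw
  rw [hw, hv]
  exact Set.subsingleton_singleton

lemma IsTree.spanningCoe_sup_edge [Finite V] {T' : SimpleGraph ↥({v}ᶜ : Set V)}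
    (hT' : T'.IsTree) (j : ↥({v}ᶜ : Set V)) : (T'.spanningCoe ⊔ edge v j).IsTree := by
  have hj : (j : V) ≠ v := j.2
  rw [isTree_iff_connected_and_card]
  refine ⟨(connected_iff_exists_forall_reachable _).2 ⟨v, fun x => ?_⟩, ?_⟩
  · by_cases hx : x = v
    · rw [hx]
    have hvj : (T'.spanningCoe ⊔ edge v j).Adj v j := by simp [edge_adj, hj.symm]
    exact hvj.reachable.trans
      (((hT'.connected j ⟨x, hx⟩).map (Embedding.map _ T').toHom).mono le_sup_left)
  · have hnew : s(v, (j : V)) ∉ (Function.Embedding.subtype _).sym2Map '' T'.edgeSet := by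
      rintro ⟨e, -, he⟩
      obtain ⟨a, -, ha⟩ := Sym2.mem_map.1 (he ▸ Sym2.mem_mk_left v j)
      exact a.2 ha
    rw [edgeSet_sup, spanningCoe, edgeSet_map, edgeSet_edge_of_ne hj.symm, Set.union_singleton,
      Nat.card_coe_set_eq, Set.ncard_insert_of_notMem hnew,
      Set.ncard_image_of_injective _ (Function.Embedding.subtype _).sym2Map.injective,
      ← Nat.card_coe_set_eq, (isTree_iff_connected_and_card.1 hT').2,
      Set.natCard_compl_singleton_add_one]

lemma forall_card_neighborSet_spanningCoe_sup_edge_iff [Finite V] [DecidableEq V] {d : V → ℕ}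
    (hd : d v = 1) (T' : SimpleGraph ↥({v}ᶜ : Set V)) (j : ↥({v}ᶜ : Set V)) :
    (∀ i, Nat.card ((T'.spanningCoe ⊔ edge v j).neighborSet i) = d i) ↔
      ∀ w, Nat.card (T'.neighborSet w) + (if w = j then 1 else 0) = d w := by
  refine ⟨fun h w => card_neighborSet_spanningCoe_sup_edge T' j w ▸ h w, fun h i => ?_⟩
  by_cases hi : i = v
  · rw [hi, neighborSet_spanningCoe_sup_edge_self, Nat.card_unique, hd]
  · exact (card_neighborSet_spanningCoe_sup_edge T' j ⟨i, hi⟩).trans (h ⟨i, hi⟩)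

theorem card_isTree_eq_sum_of_leaf [Fintype V] [DecidableEq V] {d : V → ℕ} (hd : d v = 1) :
    Nat.card {T : SimpleGraph V // T.IsTree ∧ ∀ i, Nat.card (T.neighborSet i) = d i} =
      ∑ j : ↥({v}ᶜ : Set V), Nat.card {T' : SimpleGraph ↥({v}ᶜ : Set V) // T'.IsTree ∧
        ∀ w, Nat.card (T'.neighborSet w) + (if w = j then 1 else 0) = d w} := by
  rw [← Nat.card_sigma]
  symm
  refine Nat.card_eq_of_bijective (fun p => ⟨p.2.1.spanningCoe ⊔ edge v p.1,
    p.2.2.1.spanningCoe_sup_edge _,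
    (forall_card_neighborSet_spanningCoe_sup_edge_iff hd _ _).2 p.2.2.2⟩) ⟨?_, ?_⟩
  · rintro ⟨j₁, T₁, _⟩ ⟨j₂, T₂, _⟩ h
    have hT : T₁.spanningCoe ⊔ edge v j₁ = T₂.spanningCoe ⊔ edge v j₂ := congrArg Subtype.val h
    obtain rfl : j₁ = j₂ := Subtype.ext <| Set.singleton_injective <| by
      rw [← neighborSet_spanningCoe_sup_edge_self T₁, hT, neighborSet_spanningCoe_sup_edge_self]
    obtain rfl : T₁ = T₂ := by
      rw [← induce_compl_spanningCoe_sup_edge T₁ j₁, hT, induce_compl_spanningCoe_sup_edge]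
    rfl
  · rintro ⟨T, hT, hdeg⟩
    obtain ⟨j, hj⟩ : ∃ j, T.neighborSet v = {j} :=
      Set.ncard_eq_one.1 (by rw [← Nat.card_coe_set_eq, hdeg, hd])
    have hT_eq := spanningCoe_induce_compl_sup_edge hj
    refine ⟨⟨⟨j, (adj_of_neighborSet_eq_singleton hj).ne'⟩, T.induce {v}ᶜ,
      hT.induce_compl_singleton hj,
      (forall_card_neighborSet_spanningCoe_sup_edge_iff hd _ _).1 (by rwa [hT_eq])⟩, ?_⟩
    exact Subtype.ext hT_eq

lemma card_isTree_of_card_eq_two [Fintype V] [DecidableEq V] (hV : Nat.card V = 2) :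
    Nat.card {T : SimpleGraph V // T.IsTree ∧ ∀ i, Nat.card (T.neighborSet i) = 1} = 1 := by
  obtain ⟨v⟩ : Nonempty V := Nat.card_pos_iff.1 (by omega) |>.1
  have hcard := Set.natCard_compl_singleton_add_one v
  have : Subsingleton ↥({v}ᶜ : Set V) := Finite.card_le_one_iff_subsingleton.1 (by omega)
  have hfiber (j : ↥({v}ᶜ : Set V)) : Nat.card {T' : SimpleGraph ↥({v}ᶜ : Set V) //
      T'.IsTree ∧ ∀ w, Nat.card (T'.neighborSet w) + (if w = j then 1 else 0) = 1} = 1 := by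
    have : Nonempty ↥({v}ᶜ : Set V) := ⟨j⟩
    refine Nat.card_eq_one_iff_unique.2 ⟨⟨fun _ _ => Subtype.ext (Subsingleton.elim _ _)⟩,
      ⟨⟨⊥, .of_subsingleton, fun w => ?_⟩⟩⟩
    simp [Subsingleton.elim w j]
  rw [card_isTree_eq_sum_of_leaf (v := v) (d := fun _ => 1) rfl, sum_congr rfl fun j _ => hfiber j,
    sum_const, card_univ, ← Nat.card_eq_fintype_card, smul_eq_mul, mul_one]
  omega

theorem card_isTree_card_neighborSet_eq_add_one [Fintype V] [DecidableEq V] (k : V → ℕ)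
    (hk : ∑ i, k i + 2 = Nat.card V) :
    Nat.card {T : SimpleGraph V // T.IsTree ∧ ∀ i, Nat.card (T.neighborSet i) = k i + 1} =
      Nat.multinomial univ k := by
  obtain ⟨n, hn⟩ : ∃ n, Nat.card V = n := ⟨_, rfl⟩
  induction n generalizing V with
  | zero => omega
  | succ n ih =>
  rcases eq_or_ne (∑ i, k i) 0 with h0 | h0
  · obtain rfl : k = 0 := funext fun i => sum_eq_zero_iff.1 h0 i (mem_univ i)
    simpa [Nat.multinomial] using card_isTree_of_card_eq_two (by omega)
  obtain ⟨v, -, hv⟩ : ∃ v ∈ univ, k v < 1 :=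
    exists_lt_of_sum_lt <| by
      rw [sum_const, card_univ, smul_eq_mul, mul_one, ← Nat.card_eq_fintype_card]
      omega
  replace hv : k v = 0 := by omega
  have hcard : Nat.card ↥({v}ᶜ : Set V) = n := by
    have := Set.natCard_compl_singleton_add_one v
    omega
  rw [card_isTree_eq_sum_of_leaf (d := (k · + 1)) (v := v) (by simp [hv]),
    Nat.multinomial_eq_sum_multinomial_update_pred h0, sum_filter,
    ← Fintype.sum_compl_singleton_of_eq_zero (a := v) (by simp [hv])]
  refine sum_congr rfl fun j _ => ?_
  split_ifs with hj
  · have hk'v : Function.update k j (k j - 1) v = 0 := by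
      rw [Function.update_of_ne (fun h => j.2 h.symm), hv]
    have hcomp : (fun w : ↥({v}ᶜ : Set V) => Function.update k j (k j - 1) w) =
        Function.update (fun w : ↥({v}ᶜ : Set V) => k w) j (k j - 1) :=
      Function.update_comp_eq_of_injective _ Subtype.val_injective _ _
    have hsum : ∑ w, Function.update (fun w : ↥({v}ᶜ : Set V) => k w) j (k j - 1) w + 2 =
        Nat.card ↥({v}ᶜ : Set V) := by
      rw [← hcomp, Fintype.sum_compl_singleton_of_eq_zero hk'v, sum_update_of_mem (mem_univ _),
        sdiff_singleton_eq_erase, hcard]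
      have := add_sum_erase _ k (mem_univ (j : V))
      omega
    rw [← Nat.multinomial_compl_singleton_of_eq_zero hk'v, hcomp, ← ih _ hsum hcard]
    exact Nat.card_congr (Equiv.subtypeEquivRight fun T' =>
      and_congr_right fun _ => forall_add_ite_eq_add_one_iff hj)
  · -- `j` would be isolated in a tree on at least two vertices.
    have : Nontrivial ↥({v}ᶜ : Set V) := Finite.one_lt_card_iff_nontrivial.1 (by omega)
    refine Nat.card_eq_zero.2 (Or.inl ⟨fun ⟨T', hT', hdeg⟩ => ?_⟩)
    have := hT'.connected.preconnected.card_neighborSet_pos j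
    have := hdeg j
    simp only [if_true] at this
    omega

lemma isTree_and_forall_odd_card_neighborSet_iff {n : ℕ} {T : SimpleGraph (Fin n)} :
    (T.IsTree ∧ ∀ i, Odd (Nat.card (T.neighborSet i))) ↔
      ∃ k ∈ (Finset.Nat.antidiagonalTuple n (n - 2)).filter (fun k => ∀ i, Even (k i)),
        T.IsTree ∧ ∀ i, Nat.card (T.neighborSet i) = k i + 1 := by
  refine ⟨fun ⟨hT, hodd⟩ => ⟨fun i => Nat.card (T.neighborSet i) - 1, ?_, hT, fun i => ?_⟩, ?_⟩
  · have hsum := hT.sum_card_neighborSet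
    rw [mem_filter, Nat.mem_antidiagonalTuple, sum_tsub_distrib _ fun i _ => (hodd i).pos]
    refine ⟨?_, fun i => Nat.Odd.sub_odd (hodd i) odd_one⟩
    simp only [sum_const, card_univ, Fintype.card_fin, smul_eq_mul, mul_one,
      Nat.card_eq_fintype_card] at hsum ⊢
    omega
  · exact (Nat.sub_add_cancel (hodd i).pos).symm
  · rintro ⟨k, hk, hT, hdeg⟩
    refine ⟨hT, fun i => ?_⟩
    rw [hdeg]
    exact ((mem_filter.1 hk).2 i).add_one

end SimpleGraph

theorem stmt_8 (n : ℕ) (hn : 2 ≤ n) :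
    Nat.card {T : SimpleGraph (Fin n) //
        T.IsTree ∧ ∀ i, Odd (Nat.card {j // T.Adj i j})} =
      ∑ k ∈ (Finset.Nat.antidiagonalTuple n (n - 2)).filter (fun k => ∀ i, Even (k i)),
        Nat.multinomial Finset.univ k := by
  rw [sum_congr rfl fun k hk =>
      (SimpleGraph.card_isTree_card_neighborSet_eq_add_one k ?_).symm,
    ← Nat.card_exists_mem_eq_sum]
  · exact Nat.card_congr (Equiv.subtypeEquivRight fun T =>
      SimpleGraph.isTree_and_forall_odd_card_neighborSet_iff)
  · intro T k₁ k₂ ⟨_, h₁⟩ ⟨_, h₂⟩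
    funext i
    have := (h₁ i).symm.trans (h₂ i)
    omega
  · rw [mem_filter, Nat.mem_antidiagonalTuple] at hk
    rw [Nat.card_eq_fintype_card, Fintype.card_fin]
    omega
end

section
/- For positive integers m, n: ∑ over tuples (k_1,...,k_m) of even natural numbers with k_1+...+k_m = n-1 of the multinomial coefficients (n-1)!/(k_1!⋯k_m!) equals (1/2^m) ∑_{i=0}^{m} C(m,i)(2i - m)^{n-1}. -/
open Finset

theorem stmt_13 (m n : ℕ) (hm : 0 < m) (hn : 0 < n) :
    (∑ k ∈ (Finset.Nat.antidiagonalTuple m (n - 1)).filter (fun k => ∀ i, Even (k i)),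
        (Nat.multinomial Finset.univ k : ℚ)) =
      (1 / 2 ^ m) *
        ∑ i ∈ Finset.range (m + 1), (m.choose i : ℚ) * (2 * (i : ℚ) - m) ^ (n - 1) := by
  set N := n - 1 with hN
  set x : Finset (Fin m) → Fin m → ℚ := fun s j => if j ∈ s then (1:ℚ) else -1 with hx
  have key : ∑ s ∈ (univ : Finset (Fin m)).powerset, (∑ j : Fin m, x s j) ^ N
      = ∑ i ∈ Finset.range (m + 1), (m.choose i : ℚ) * (2 * (i : ℚ) - m) ^ N := by
    rw [Finset.sum_powerset, card_univ, Fintype.card_fin]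
    refine Finset.sum_congr rfl fun i hi => ?_
    have hi' : i ≤ m := Nat.lt_succ_iff.mp (Finset.mem_range.mp hi)
    rw [Finset.sum_congr rfl (fun s hs => ?_), Finset.sum_const,
      Finset.card_powersetCard, card_univ, Fintype.card_fin, nsmul_eq_mul]
    obtain ⟨hs1, hs2⟩ := Finset.mem_powersetCard.mp hs
    have h1 : (univ : Finset (Fin m)).filter (· ∈ s) = s := by
      ext j; simp
    have : (∑ j : Fin m, x s j) = 2 * (i : ℚ) - m := by
      simp only [hx, Finset.sum_ite, Finset.sum_const, h1, hs2]
      have hcard : ((univ : Finset (Fin m)).filter (· ∉ s)).card = m - i := by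
        have := Finset.card_filter_add_card_filter_not (s := (univ : Finset (Fin m)))
          (p := (· ∈ s))
        rw [h1, hs2, card_univ, Fintype.card_fin] at this
        omega
      rw [hcard]
      simp only [nsmul_eq_mul, mul_one, mul_neg_one]
      push_cast [hi']
      ring
    rw [this]
  have expand : ∑ s ∈ (univ : Finset (Fin m)).powerset, (∑ j : Fin m, x s j) ^ N
      = 2 ^ m * ∑ k ∈ (Finset.Nat.antidiagonalTuple m N).filter (fun k => ∀ i, Even (k i)),
          (Nat.multinomial Finset.univ k : ℚ) := by
    have step1 : ∀ s ∈ (univ : Finset (Fin m)).powerset,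
        (∑ j : Fin m, x s j) ^ N
        = ∑ k ∈ piAntidiag (univ : Finset (Fin m)) N,
            (Nat.multinomial univ k : ℚ) * ∏ j : Fin m, (x s j) ^ (k j) := by
      intro s _
      exact Finset.sum_pow_eq_sum_piAntidiag univ (x s) N
    rw [Finset.sum_congr rfl step1, Finset.sum_comm]
    have step2 : ∀ k ∈ piAntidiag (univ : Finset (Fin m)) N,
        (∑ s ∈ (univ : Finset (Fin m)).powerset,
          (Nat.multinomial univ k : ℚ) * ∏ j : Fin m, (x s j) ^ (k j))
        = (Nat.multinomial univ k : ℚ) *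
            ∏ j : Fin m, ((1:ℚ) ^ (k j) + (-1:ℚ) ^ (k j)) := by
      intro k _
      rw [← Finset.mul_sum]
      congr 1
      rw [Finset.prod_add]
      refine Finset.sum_congr rfl fun s hs => ?_
      have : ∀ j : Fin m, (x s j) ^ (k j)
          = if j ∈ s then (1:ℚ) ^ (k j) else (-1:ℚ) ^ (k j) := by
        intro j; simp only [hx]; split <;> rfl
      simp only [this]
      rw [Finset.prod_ite]
      congr 1
      · apply Finset.prod_congr _ (fun _ _ => rfl)
        ext j; simp
      · apply Finset.prod_congr _ (fun _ _ => rfl)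
        ext j; simp
    rw [Finset.sum_congr rfl step2]
    have step3 : ∀ k : Fin m → ℕ,
        (∏ j : Fin m, ((1:ℚ) ^ (k j) + (-1:ℚ) ^ (k j)))
        = if (∀ j, Even (k j)) then (2:ℚ) ^ m else 0 := by
      intro k
      by_cases h : ∀ j, Even (k j)
      · rw [if_pos h]
        have : ∀ j : Fin m, (1:ℚ) ^ (k j) + (-1:ℚ) ^ (k j) = 2 := by
          intro j
          rw [one_pow, (h j).neg_one_pow]; norm_num
        rw [Finset.prod_congr rfl (fun j _ => this j), Finset.prod_const, card_univ,
          Fintype.card_fin]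
      · rw [if_neg h]
        push_neg at h
        obtain ⟨j, hj⟩ := h
        apply Finset.prod_eq_zero (Finset.mem_univ j)
        rw [one_pow, (Nat.odd_iff.mpr (Nat.not_even_iff.mp hj)).neg_one_pow]
        norm_num
    calc ∑ k ∈ piAntidiag (univ : Finset (Fin m)) N,
          (Nat.multinomial univ k : ℚ) * ∏ j : Fin m, ((1:ℚ) ^ (k j) + (-1:ℚ) ^ (k j))
        = ∑ k ∈ piAntidiag (univ : Finset (Fin m)) N,
            (if (∀ j, Even (k j)) then (Nat.multinomial univ k : ℚ) * 2 ^ m else 0) := by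
          refine Finset.sum_congr rfl fun k _ => ?_
          rw [step3 k, mul_ite, mul_zero]
      _ = ∑ k ∈ (piAntidiag (univ : Finset (Fin m)) N).filter (fun k => ∀ j, Even (k j)),
            (Nat.multinomial univ k : ℚ) * 2 ^ m := (Finset.sum_filter _ _).symm
      _ = 2 ^ m * ∑ k ∈ (Finset.Nat.antidiagonalTuple m N).filter (fun k => ∀ j, Even (k j)),
            (Nat.multinomial univ k : ℚ) := by
          rw [Finset.piAntidiag_univ_fin_eq_antidiagonalTuple, Finset.mul_sum]
          exact Finset.sum_congr rfl fun k _ => mul_comm _ _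
  rw [← key, expand]
  field_simp
end
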